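/- arXiv:math/0609668 — 9 statements merged into one kernel-verified Lean document; each statement's English description precedes it below -/
import Mathlib

section
/- Let u₁, u₂, u₃ be three distinct points on the circle of radius r centered at the origin in ℝ². If r ≤ 2M and d(uᵢ, uⱼ) ≥ M for all i ≠ j, then the inscribed angle ∠u₁u₂u₃ satisfies arcsin(1/4) ≤ ∠u₁u₂u₃ ≤ 2·arccos(1/4). -/
open EuclideanGeometry Real Metric

/-! By the law of sines each angle of the triangle has sine equal to the opposite side over the
diameter `2r ≤ 4M`, hence at least `1/4`, so each angle is at least `arcsin (1/4)`. The angle at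
`u₂` is then at most `π - 2 arcsin (1/4) = 2 arccos (1/4)`, since the three angles sum to `π`. -/

theorem Real.arcsin_le_of_le_sin {x θ : ℝ} (hθ : -(π / 2) ≤ θ) (h : x ≤ sin θ) :
    arcsin x ≤ θ := by
  rcases le_or_gt θ (π / 2) with hθ' | hθ'
  · exact (arcsin_le_arcsin h).trans (arcsin_sin hθ hθ').le
  · exact (arcsin_le_pi_div_two x).trans hθ'.le

namespace EuclideanGeometry.Sphere

variable {V P : Type*} [NormedAddCommGroup V] [InnerProductSpace ℝ V] [MetricSpace P]
  [NormedAddTorsor V P] [hd2 : Fact (Module.finrank ℝ V = 2)]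

theorem sin_angle_eq_dist_div_two_mul_radius {s : Sphere P} {p₁ p₂ p₃ : P} (hp₁ : p₁ ∈ s)
    (hp₂ : p₂ ∈ s) (hp₃ : p₃ ∈ s) (hp₁p₂ : p₁ ≠ p₂) (hp₁p₃ : p₁ ≠ p₃) (hp₂p₃ : p₂ ≠ p₃) :
    sin (∠ p₁ p₂ p₃) = dist p₁ p₃ / (2 * s.radius) := by
  have : FiniteDimensional ℝ V := .of_fact_finrank_eq_two
  have : Module.Oriented ℝ V (Fin 2) := ⟨(Module.finBasisOfFinrankEq ℝ V hd2.out).orientation⟩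
  rw [← dist_div_sin_oangle_eq_two_mul_radius hp₁ hp₂ hp₃ hp₁p₂ hp₁p₃ hp₂p₃,
    div_div_cancel₀ (dist_ne_zero.2 hp₁p₃), ← Real.Angle.sin_toReal,
    abs_sin_eq_sin_abs_of_abs_le_pi (Real.Angle.abs_toReal_le_pi _),
    angle_eq_abs_oangle_toReal hp₁p₂ hp₂p₃.symm]

theorem arcsin_quarter_le_angle {s : Sphere P} {p₁ p₂ p₃ : P} (hp₁ : p₁ ∈ s) (hp₂ : p₂ ∈ s)
    (hp₃ : p₃ ∈ s) (hp₁p₂ : p₁ ≠ p₂) (hp₁p₃ : p₁ ≠ p₃) (hp₂p₃ : p₂ ≠ p₃)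
    (hr : s.radius ≤ 2 * dist p₁ p₃) : arcsin (1 / 4) ≤ ∠ p₁ p₂ p₃ := by
  have hr₀ : 0 < s.radius := by
    have := dist_triangle_right p₁ p₃ s.center
    rw [mem_sphere.1 hp₁, mem_sphere.1 hp₃] at this
    linarith [dist_pos.2 hp₁p₃]
  refine arcsin_le_of_le_sin (by linarith [angle_nonneg p₁ p₂ p₃, pi_pos]) ?_
  rw [sin_angle_eq_dist_div_two_mul_radius hp₁ hp₂ hp₃ hp₁p₂ hp₁p₃ hp₂p₃,
    le_div_iff₀ (by positivity)]
  linarith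

end EuclideanGeometry.Sphere

theorem stmt0_general (M r : ℝ) (hr : r ≤ 2 * M)
    (u₁ u₂ u₃ : EuclideanSpace ℝ (Fin 2))
    (h₁ : u₁ ∈ sphere (0 : EuclideanSpace ℝ (Fin 2)) r)
    (h₂ : u₂ ∈ sphere (0 : EuclideanSpace ℝ (Fin 2)) r)
    (h₃ : u₃ ∈ sphere (0 : EuclideanSpace ℝ (Fin 2)) r)
    (h12 : u₁ ≠ u₂) (h13 : u₁ ≠ u₃) (h23 : u₂ ≠ u₃)
    (d12 : M ≤ dist u₁ u₂) (d13 : M ≤ dist u₁ u₃) (d23 : M ≤ dist u₂ u₃) :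
    arcsin (1 / 4) ≤ angle u₁ u₂ u₃ ∧ angle u₁ u₂ u₃ ≤ 2 * arccos (1 / 4) := by
  let s : Sphere (EuclideanSpace ℝ (Fin 2)) := ⟨0, r⟩
  have : Fact (Module.finrank ℝ (EuclideanSpace ℝ (Fin 2)) = 2) := ⟨finrank_euclideanSpace_fin⟩
  have h₂₁₃ : arcsin (1 / 4) ≤ ∠ u₂ u₁ u₃ := Sphere.arcsin_quarter_le_angle (s := s) h₂ h₁ h₃
    h12.symm h23 h13 (by linarith)
  have h₂₃₁ : arcsin (1 / 4) ≤ ∠ u₂ u₃ u₁ := Sphere.arcsin_quarter_le_angle (s := s) h₂ h₃ h₁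
    h23 h12.symm h13.symm (by rw [dist_comm]; linarith)
  have h₁₂₃ : arcsin (1 / 4) ≤ ∠ u₁ u₂ u₃ := Sphere.arcsin_quarter_le_angle (s := s) h₁ h₂ h₃
    h12 h13 h23 (by linarith)
  have hsum := angle_add_angle_add_angle_eq_pi u₃ h12.symm
  rw [angle_comm u₃] at hsum
  rw [arccos_eq_pi_div_two_sub_arcsin]
  constructor <;> linarith

/-- Three distinct points on a circle of radius `r ≤ 2M` about the origin in `ℝ²`, with
pairwise distances at least `M`, have inscribed angle `∠ u₁ u₂ u₃` between
`arcsin (1/4)` and `2 * arccos (1/4)`. -/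
theorem stmt0 (M r : ℝ) (hM : 0 < M) (hr : r ≤ 2 * M)
    (u₁ u₂ u₃ : EuclideanSpace ℝ (Fin 2))
    (h₁ : u₁ ∈ sphere (0 : EuclideanSpace ℝ (Fin 2)) r)
    (h₂ : u₂ ∈ sphere (0 : EuclideanSpace ℝ (Fin 2)) r)
    (h₃ : u₃ ∈ sphere (0 : EuclideanSpace ℝ (Fin 2)) r)
    (h12 : u₁ ≠ u₂) (h13 : u₁ ≠ u₃) (h23 : u₂ ≠ u₃)
    (d12 : M ≤ dist u₁ u₂) (d13 : M ≤ dist u₁ u₃) (d23 : M ≤ dist u₂ u₃) :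
    arcsin (1 / 4) ≤ angle u₁ u₂ u₃ ∧ angle u₁ u₂ u₃ ≤ 2 * arccos (1 / 4) :=
  stmt0_general M r hr u₁ u₂ u₃ h₁ h₂ h₃ h12 h13 h23 d12 d13 d23
end

section
/- Let t be a triangle in ℝ² with all side lengths at least M and all interior angles between α and β, where 0 < α, β < π. Then the incentre c(t) of t satisfies B(c(t), bM) ⊆ t, where b = cos²(β/2)·sin(α/2)/2. -/
open EuclideanGeometry Real Metric

/-- The incentre of the triangle with vertices `u, v, w`, given in barycentric form with
weights the opposite side lengths. -/
noncomputable def incentre (u v w : EuclideanSpace ℝ (Fin 2)) : EuclideanSpace ℝ (Fin 2) :=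
  (dist v w + dist u w + dist u v)⁻¹ •
    (dist v w • u + dist u w • v + dist u v • w)

local notation "⟪" x ", " y "⟫" => @inner ℝ _ _ x y

lemma arith (α β M a b c C : ℝ) (hα : 0 < α) (hβ : β < π) (hM : 0 < M)
    (ha : M ≤ a) (hb : M ≤ b) (hc : c ≤ a + b)
    (hC1 : α ≤ C) (hC2 : C ≤ β) :
    (cos (β/2)^2 * sin (α/2) / 2 * M) * (a + b + c) ≤ a * (b * sin C) := by
  have hαβ : α ≤ β := hC1.trans hC2
  have h1 : 0 < sin (α/2) := sin_pos_of_pos_of_lt_pi (by linarith) (by linarith [pi_pos])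
  have h2 : 0 < cos (β/2) := cos_pos_of_mem_Ioo ⟨by linarith [pi_pos], by linarith⟩
  have h3 : cos (β/2) ≤ 1 := cos_le_one _
  have h4 : sin (α/2) ≤ sin (C/2) := by
    apply (strictMonoOn_sin.monotoneOn) ⟨by linarith, by linarith⟩ ⟨by linarith, by linarith⟩
    linarith
  have h5 : cos (β/2) ≤ cos (C/2) :=
    cos_le_cos_of_nonneg_of_le_pi (by linarith) (by linarith) (by linarith)
  have h6 : sin C = 2 * sin (C/2) * cos (C/2) := by rw [← sin_two_mul]; ring_nf
  have ha0 : 0 < a := lt_of_lt_of_le hM ha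
  have hb0 : 0 < b := lt_of_lt_of_le hM hb
  have hs : 0 ≤ sin (C/2) := le_trans h1.le h4
  have hsin : 2 * (sin (α/2) * cos (β/2)) ≤ sin C := by
    rw [h6]; nlinarith [mul_le_mul h4 h5 h2.le hs]
  have hMab : M * (a+b) ≤ 2 * (a*b) := by nlinarith
  calc (cos (β/2)^2 * sin (α/2) / 2 * M) * (a + b + c)
      ≤ (cos (β/2)^2 * sin (α/2) / 2 * M) * (2*(a+b)) := by
        have h7 : 0 ≤ cos (β/2)^2 * sin (α/2) / 2 * M := by positivity
        nlinarith
    _ = cos (β/2) * (cos (β/2) * (sin (α/2) * (M * (a+b)))) := by ring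
    _ ≤ 1 * (cos (β/2) * (sin (α/2) * (2*(a*b)))) := by
        apply mul_le_mul h3 _ (by positivity) (by norm_num)
        have := mul_le_mul_of_nonneg_left hMab h1.le
        nlinarith
    _ = (a*b) * (2 * (sin (α/2) * cos (β/2))) := by ring
    _ ≤ (a*b) * sin C := mul_le_mul_of_nonneg_left hsin (by positivity)
    _ = a * (b * sin C) := by ring

set_option maxHeartbeats 2000000 in
lemma key (α β M : ℝ) (hα : 0 < α) (hβ : β < π) (hM : 0 < M)
    (u v w : EuclideanSpace ℝ (Fin 2))
    (hind : ¬ Collinear ℝ ({u, v, w} : Set (EuclideanSpace ℝ (Fin 2))))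
    (hsb : M ≤ dist u w) (hsa : M ≤ dist v w)
    (hC1 : α ≤ angle u w v) (hC2 : angle u w v ≤ β)
    (f : EuclideanSpace ℝ (Fin 2) →ᵃ[ℝ] ℝ) (hfu : f u = 1) (hfv : f v = 0) (hfw : f w = 0)
    (x : EuclideanSpace ℝ (Fin 2))
    (hx : dist x (incentre u v w) < cos (β/2)^2 * sin (α/2) / 2 * M) : 0 ≤ f x := by
  set a := dist v w with hadef
  set b := dist u w with hbdef
  set c := dist u v with hcdef
  set P := a + b + c with hPdef
  set C := angle u w v with hCdef
  set r := cos (β/2)^2 * sin (α/2) / 2 * M with hrdef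
  have ha0 : 0 < a := lt_of_lt_of_le hM hsa
  have hb0 : 0 < b := lt_of_lt_of_le hM hsb
  have hc0 : 0 ≤ c := dist_nonneg
  have hP0 : 0 < P := by positivity
  have h3 : f.linear (u - w) = 1 := by
    rw [← vsub_eq_sub, AffineMap.linearMap_vsub, hfu, hfw]; norm_num
  have h4 : f.linear (v - w) = 0 := by
    rw [← vsub_eq_sub, AffineMap.linearMap_vsub, hfv, hfw]; norm_num
  -- value of f at the incentre
  have hfc : f (incentre u v w) = a / P := by
    have hvsub : incentre u v w - w = P⁻¹ • (a • (u - w) + b • (v - w)) := by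
      have h1 : P⁻¹ • (P • w) = w := by rw [smul_smul, inv_mul_cancel₀ hP0.ne', one_smul]
      calc incentre u v w - w = P⁻¹ • (a • u + b • v + c • w) - P⁻¹ • (P • w) := by
            rw [h1]; rfl
        _ = P⁻¹ • (a • (u - w) + b • (v - w)) := by
            rw [← smul_sub]; congr 1; rw [hPdef]; module
    have h2 : f (incentre u v w) - f w = f.linear (incentre u v w - w) := by
      rw [← vsub_eq_sub, ← vsub_eq_sub, AffineMap.linearMap_vsub]
    rw [hvsub, map_smul, map_add, map_smul, map_smul, h3, h4, hfw, smul_eq_mul, smul_eq_mul,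
      smul_eq_mul] at h2
    rw [div_eq_inv_mul]
    linarith
  -- norms and the angle
  have hnvw : ‖v - w‖ = a := by rw [hadef, dist_eq_norm]
  have hnuw : ‖u - w‖ = b := by rw [hbdef, dist_eq_norm]
  have hvw0 : v - w ≠ 0 := by
    intro h; rw [h, norm_zero] at hnvw; exact ha0.ne hnvw
  have hcos : ⟪u - w, v - w⟫ = b * (a * cos C) := by
    have h := InnerProductGeometry.cos_angle (u - w) (v - w)
    have hang : C = InnerProductGeometry.angle (u - w) (v - w) := rfl
    rw [← hang, hnuw, hnvw, eq_div_iff (by positivity : b * a ≠ 0)] at h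
    linarith
  set t : ℝ := ⟪v - w, u - w⟫ / ‖v - w‖^2 with htdef
  set e := (u - w) - t • (v - w) with hedef
  have he1 : ⟪v - w, e⟫ = 0 := by
    rw [hedef, inner_sub_right, real_inner_smul_right, htdef, real_inner_self_eq_norm_sq,
      div_mul_cancel₀ _ (by positivity : ‖v - w‖^2 ≠ 0), sub_self]
  have he1' : ⟪e, v - w⟫ = 0 := by rw [real_inner_comm]; exact he1
  have he2 : ⟪e, u - w⟫ = ‖e‖^2 := by
    have h5 : ⟪e, e⟫ = ‖e‖^2 := real_inner_self_eq_norm_sq e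
    calc ⟪e, u - w⟫ = ⟪e, e + t • (v - w)⟫ := by
          rw [show e + t • (v - w) = u - w by rw [hedef]; abel]
      _ = ⟪e, e⟫ + t * ⟪e, v - w⟫ := by rw [inner_add_right, real_inner_smul_right]
      _ = ‖e‖^2 := by rw [he1', h5]; ring
  have hsinC : 0 < sin C := sin_pos_of_pos_of_lt_pi (lt_of_lt_of_le hα hC1) (lt_of_le_of_lt hC2 hβ)
  have henorm : ‖e‖ = b * sin C := by
    have h7 : ‖e‖^2 = (b * sin C)^2 := by
      have h8 : ‖e‖^2 = ‖u - w‖^2 - 2 * ⟪u - w, t • (v - w)⟫ + ‖t • (v - w)‖^2 :=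
        norm_sub_sq_real _ _
      rw [real_inner_smul_right, norm_smul, mul_pow, hcos, hnuw, hnvw, Real.norm_eq_abs,
        sq_abs] at h8
      have ht : t * a^2 = b * (a * cos C) := by
        rw [htdef, hnvw, real_inner_comm, hcos, div_mul_cancel₀ _ (by positivity : a^2 ≠ 0)]
      have ht' : t * a = b * cos C :=
        mul_right_cancel₀ ha0.ne' (by linear_combination ht)
      have h10 : sin C ^ 2 = 1 - cos C ^ 2 := sin_sq C
      rw [h8]
      linear_combination (t*a - b*cos C) * ht' - b^2 * h10
    exact (sq_eq_sq₀ (norm_nonneg e) (by positivity)).mp h7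
  -- decompose d in the basis (u-w, v-w)
  set d := x - incentre u v w with hddef
  have hdn : ‖d‖ < r := by rw [hddef, ← dist_eq_norm]; exact hx
  have hli : LinearIndependent ℝ ![u - w, v - w] := by
    rw [linearIndependent_fin2]
    refine ⟨by simpa using hvw0, fun s hs => hind ?_⟩
    simp only [Matrix.cons_val_one, Matrix.head_cons, Matrix.cons_val_zero] at hs
    have hu : u = AffineMap.lineMap w v s := by
      rw [AffineMap.lineMap_apply]
      simp only [vsub_eq_sub, vadd_eq_add]
      rw [hs]; abel
    have hmem : u ∈ line[ℝ, w, v] := hu ▸ AffineMap.lineMap_mem_affineSpan_pair s w v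
    have hcol := collinear_insert_of_mem_affineSpan_pair hmem
    rwa [Set.pair_comm w v] at hcol
  have hcard : Fintype.card (Fin 2) = Module.finrank ℝ (EuclideanSpace ℝ (Fin 2)) := by simp
  have hspan : Submodule.span ℝ ({u - w, v - w} : Set (EuclideanSpace ℝ (Fin 2))) = ⊤ := by
    have h15 := hli.span_eq_top_of_card_eq_finrank hcard
    rwa [show Set.range ![u - w, v - w] = {u - w, v - w} by
      simp [Matrix.range_cons, Matrix.range_empty, Set.pair_comm]] at h15
  obtain ⟨p, q, hd⟩ := Submodule.mem_span_pair.mp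
    (hspan ▸ Submodule.mem_top : d ∈ Submodule.span ℝ ({u - w, v - w} : Set _))
  replace hd : d = p • (u - w) + q • (v - w) := hd.symm
  have hfp : f.linear d = p := by
    rw [hd, map_add, map_smul, map_smul, h3, h4, smul_eq_mul, smul_eq_mul]; ring
  have hinner : ⟪e, d⟫ = p * ‖e‖^2 := by
    rw [hd, inner_add_right, real_inner_smul_right, real_inner_smul_right, he2, he1']; ring
  have habs : |p| * ‖e‖^2 ≤ ‖e‖ * ‖d‖ := by
    have h14 := abs_real_inner_le_norm e d
    rwa [hinner, abs_mul, abs_of_nonneg (sq_nonneg ‖e‖ : (0:ℝ) ≤ ‖e‖^2)] at h14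
  have hh0 : 0 < b * sin C := by positivity
  have habs' : |p| * (b * sin C) ≤ ‖d‖ := by
    rw [henorm] at habs
    have h12 : |p| * (b * sin C) * (b * sin C) ≤ (b * sin C) * ‖d‖ := by nlinarith
    exact le_of_mul_le_mul_right (by nlinarith) hh0
  -- final computation
  have hfx : f x = a / P + p := by
    have h13 : f x - f (incentre u v w) = f.linear d := by
      rw [hddef, ← vsub_eq_sub, ← vsub_eq_sub, AffineMap.linearMap_vsub]
    rw [hfc, hfp] at h13
    linarith
  have hc' : c ≤ a + b := by
    rw [hcdef, hadef, hbdef]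
    calc dist u v ≤ dist u w + dist w v := dist_triangle u w v
      _ = dist v w + dist u w := by rw [dist_comm w v]; ring
  have harith : r * P ≤ a * (b * sin C) :=
    arith α β M a b c C hα hβ hM hsa hsb hc' hC1 hC2
  have h8 : |p| * (b*sin C) < r := lt_of_le_of_lt habs' hdn
  have h9 : |p| * (b*sin C) * P < a * (b*sin C) :=
    lt_of_lt_of_le (mul_lt_mul_of_pos_right h8 hP0) harith
  have h10 : |p| * P < a := by
    have := mul_lt_mul_of_pos_left h9 (by positivity : (0:ℝ) < (b * sin C)⁻¹)
    nlinarith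
  have h11 : |p| < a / P := (lt_div_iff₀ hP0).mpr h10
  have := neg_abs_le p
  rw [hfx]
  linarith

lemma incentre_perm1 (u v w : EuclideanSpace ℝ (Fin 2)) : incentre v u w = incentre u v w := by
  unfold incentre
  rw [dist_comm v u,
    show dist u w + dist v w + dist u v = dist v w + dist u w + dist u v from by ring]
  congr 1
  abel

lemma incentre_perm2 (u v w : EuclideanSpace ℝ (Fin 2)) : incentre w u v = incentre u v w := by
  unfold incentre
  rw [dist_comm w v, dist_comm w u,
    show dist u v + dist v w + dist u w = dist v w + dist u w + dist u v from by ring]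
  congr 1
  abel


set_option maxHeartbeats 1000000 in
/-- If a triangle has all side lengths at least `M` and all interior angles between `α`
and `β` (with `0 < α`, `β < π`), then the open ball of radius `b·M` about its incentre is
contained in the triangle, where `b = cos²(β/2)·sin(α/2)/2`. -/
theorem stmt2 (α β M : ℝ) (hα : 0 < α) (hβ : β < π) (hαπ : α < π) (hβ0 : 0 < β)
    (hM : 0 < M) (u v w : EuclideanSpace ℝ (Fin 2))
    (hind : ¬ Collinear ℝ ({u, v, w} : Set (EuclideanSpace ℝ (Fin 2))))
    (hs₁ : M ≤ dist u v) (hs₂ : M ≤ dist u w) (hs₃ : M ≤ dist v w)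
    (ha₁ : α ≤ angle v u w) (ha₁' : angle v u w ≤ β)
    (ha₂ : α ≤ angle u v w) (ha₂' : angle u v w ≤ β)
    (ha₃ : α ≤ angle u w v) (ha₃' : angle u w v ≤ β) :
    ball (incentre u v w) ((cos (β / 2) ^ 2 * sin (α / 2) / 2) * M) ⊆
      convexHull ℝ ({u, v, w} : Set (EuclideanSpace ℝ (Fin 2))) := by
  intro x hx
  rw [mem_ball] at hx
  have haff : AffineIndependent ℝ ![u, v, w] := affineIndependent_iff_not_collinear_set.mpr hind
  have htop : affineSpan ℝ (Set.range ![u, v, w]) = ⊤ :=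
    haff.affineSpan_eq_top_iff_card_eq_finrank_add_one.mpr (by simp)
  let B : AffineBasis (Fin 3) ℝ (EuclideanSpace ℝ (Fin 2)) := ⟨![u, v, w], haff, htop⟩
  have hind1 : ¬ Collinear ℝ ({v, u, w} : Set (EuclideanSpace ℝ (Fin 2))) := by
    rwa [Set.insert_comm]
  have hind2 : ¬ Collinear ℝ ({w, u, v} : Set (EuclideanSpace ℝ (Fin 2))) := by
    rw [Set.insert_comm, Set.pair_comm]
    exact hind
  have h0 : ∀ i, 0 ≤ B.coord i x := by
    intro i
    fin_cases i
    · refine key α β M hα hβ hM u v w hind hs₂ hs₃ ha₃ ha₃' (B.coord 0) ?_ ?_ ?_ x hx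
      · exact B.coord_apply_eq 0
      · exact B.coord_apply_ne (i := 0) (j := 1) (by decide)
      · exact B.coord_apply_ne (i := 0) (j := 2) (by decide)
    · refine key α β M hα hβ hM v u w hind1 hs₃ hs₂ ?_ ?_ (B.coord 1) ?_ ?_ ?_ x ?_
      · rwa [angle_comm]
      · rwa [angle_comm]
      · exact B.coord_apply_eq 1
      · exact B.coord_apply_ne (i := 1) (j := 0) (by decide)
      · exact B.coord_apply_ne (i := 1) (j := 2) (by decide)
      · rwa [incentre_perm1]
    · refine key α β M hα hβ hM w u v hind2 (by rwa [dist_comm]) hs₁ ?_ ?_ (B.coord 2) ?_ ?_ ?_ x ?_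
      · rwa [angle_comm]
      · rwa [angle_comm]
      · exact B.coord_apply_eq 2
      · exact B.coord_apply_ne (i := 2) (j := 0) (by decide)
      · exact B.coord_apply_ne (i := 2) (j := 1) (by decide)
      · rwa [incentre_perm2]
  have hcomb := B.affineCombination_coord_eq_self x
  have hmem := affineCombination_mem_convexHull (s := Finset.univ) (v := ⇑B)
    (w := fun i => B.coord i x) (fun i _ => h0 i) (B.sum_coord_apply_eq_one x)
  rw [hcomb] at hmem
  rwa [show Set.range ⇑B = ({u, v, w} : Set (EuclideanSpace ℝ (Fin 2))) from by
    rw [show ⇑B = ![u, v, w] from rfl]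
    simp only [Matrix.range_cons, Matrix.range_empty, Set.union_empty, Set.union_insert,
      Set.union_singleton]
    rw [Set.insert_comm w v, Set.pair_comm w u, Set.insert_comm v u]] at hmem
end

section
/- Let t = △uvw and t' = △uvw' be two triangles in ℝ² sharing the edge uv, having disjoint interiors, with all side lengths at least M and all angles between α and β (0 < α, β < π). Then the line segment joining the incentres c(t) and c(t') is contained in t ∪ t' and intersects the common edge uv. -/
open EuclideanGeometry Real Metric

section Helpers
open Set
local notation "E2" => EuclideanSpace ℝ (Fin 2)

lemma aff3 (f : E2 →ᵃ[ℝ] ℝ) (x y z : E2) (a b c : ℝ) (h : a + b + c = 1) :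
    f (a • x + b • y + c • z) = a * f x + b * f y + c * f z := by
  have hc : c = 1 - a - b := by linarith
  subst hc
  have h1 : a • x + b • y + (1 - a - b) • z = (a • (x - z) + b • (y - z)) +ᵥ z := by
    simp [vadd_eq_add]; module
  rw [h1, AffineMap.map_vadd, map_add, map_smul, map_smul]
  have hx : f.linear (x - z) = f x - f z := f.linearMap_vsub x z
  have hy : f.linear (y - z) = f y - f z := f.linearMap_vsub y z
  rw [hx, hy]; simp [vadd_eq_add]; ring

lemma mkBasis (u v w : E2) (h : ¬ Collinear ℝ ({u, v, w} : Set E2)) :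
    ∃ b : AffineBasis (Fin 3) ℝ E2, b 0 = u ∧ b 1 = v ∧ b 2 = w := by
  have hai : AffineIndependent ℝ ![u, v, w] := affineIndependent_iff_not_collinear_set.2 h
  have htot : affineSpan ℝ (Set.range ![u, v, w]) = ⊤ := by
    rw [hai.affineSpan_eq_top_iff_card_eq_finrank_add_one]; simp
  exact ⟨⟨![u, v, w], hai, htot⟩, rfl, rfl, rfl⟩

lemma rangeB (B : AffineBasis (Fin 3) ℝ E2) (u v w : E2)
    (h0 : B 0 = u) (h1 : B 1 = v) (h2 : B 2 = w) :
    Set.range ⇑B = ({u, v, w} : Set E2) := by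
  ext x
  constructor
  · rintro ⟨i, rfl⟩
    fin_cases i <;> simp only [Fin.isValue, show ((⟨0,by norm_num⟩ : Fin 3)) = 0 from rfl] <;>
      simp [h0, h1, h2]
  · rintro (rfl | rfl | rfl)
    exacts [⟨0, h0⟩, ⟨1, h1⟩, ⟨2, h2⟩]


lemma keyAux (a b c d : ℝ) (hd : 0 < d) (htri : |c| * d + a ≤ b) : 0 ≤ -a + b + d * c := by
  nlinarith [mul_nonneg hd.le (by linarith [neg_abs_le c] : (0:ℝ) ≤ |c| + c)]

lemma nonnegAux (d l : ℝ) (hd : 0 < d) (h : 0 ≤ d * l) : 0 ≤ l := by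
  by_contra hn
  push_neg at hn
  nlinarith

set_option maxHeartbeats 1000000 in
lemma coord2_neg (u v w w' : E2)
    (hind' : ¬ Collinear ℝ ({u, v, w'} : Set E2))
    (hdisj : interior (convexHull ℝ ({u, v, w} : Set E2)) ∩
        interior (convexHull ℝ ({u, v, w'} : Set E2)) = ∅)
    (B B' : AffineBasis (Fin 3) ℝ E2)
    (hB0 : B 0 = u) (hB1 : B 1 = v) (hB2 : B 2 = w)
    (hB'0 : B' 0 = u) (hB'1 : B' 1 = v) (hB'2 : B' 2 = w') :
    B.coord 2 w' < 0 := by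
  set a0 := B.coord 0 w' with ha0
  set a1 := B.coord 1 w' with ha1
  set a2 := B.coord 2 w' with ha2
  have hsum : a0 + a1 + a2 = 1 := by
    have := B.sum_coord_apply_eq_one w'
    rwa [Fin.sum_univ_three] at this
  have hrep : a0 • u + a1 • v + a2 • w = w' := by
    have := B.linear_combination_coord_eq_self w'
    rwa [Fin.sum_univ_three, hB0, hB1, hB2] at this
  have hIC : interior (convexHull ℝ ({u, v, w} : Set E2)) = {x | ∀ i, 0 < B.coord i x} := by
    rw [← rangeB B u v w hB0 hB1 hB2, B.interior_convexHull]
  have hIC' : interior (convexHull ℝ ({u, v, w'} : Set E2)) = {x | ∀ i, 0 < B'.coord i x} := by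
    rw [← rangeB B' u v w' hB'0 hB'1 hB'2, B'.interior_convexHull]
  -- a2 ≠ 0
  have hne : a2 ≠ 0 := by
    intro h0
    apply hind'
    have ha01 : a0 = 1 - a1 := by linarith
    have hmem : w' ∈ line[ℝ, u, v] := by
      have : w' = AffineMap.lineMap u v a1 := by
        rw [AffineMap.lineMap_apply, ← hrep, h0, ha01]
        simp [vsub_eq_sub, vadd_eq_add]
        module
      rw [this]
      exact AffineMap.lineMap_mem_affineSpan_pair a1 u v
    have hset : ({u, v, w'} : Set E2) = insert w' {u, v} := by
      ext x; simp; tauto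
    rw [hset]
    exact (collinear_insert_iff_of_mem_affineSpan hmem).2 (collinear_pair ℝ u v)
  -- not positive
  have hnpos : ¬ (0 < a2) := by
    intro hpos
    set s : ℝ := 1 + |a0| + |a1| with hs
    have hs1 : (1:ℝ) ≤ s := by
      have := abs_nonneg a0; have := abs_nonneg a1; rw [hs]; linarith
    set t : ℝ := (4 * s)⁻¹ with ht
    have hts : t * s = 4⁻¹ := by
      rw [ht]; field_simp
    have ht0 : 0 < t := by positivity
    have ht4 : t ≤ 4⁻¹ := by
      calc t = t * 1 := by ring
        _ ≤ t * s := mul_le_mul_of_nonneg_left hs1 ht0.le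
        _ = 4⁻¹ := hts
    have ht1 : t < 1 := by
      rw [ht]
      have : (1:ℝ) < 4 * s := by linarith
      exact inv_lt_one_of_one_lt₀ this
    have hta0 : t * |a0| < 4⁻¹ := by
      calc t * |a0| < t * s := by
            apply mul_lt_mul_of_pos_left _ ht0
            have := abs_nonneg a1
            rw [hs]; linarith
        _ = 4⁻¹ := hts
    have hta1 : t * |a1| < 4⁻¹ := by
      calc t * |a1| < t * s := by
            apply mul_lt_mul_of_pos_left _ ht0
            have := abs_nonneg a0
            rw [hs]; linarith
        _ = 4⁻¹ := hts
    set x : E2 := ((1-t)/2) • u + ((1-t)/2) • v + t • w' with hx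
    have hxs : (1-t)/2 + (1-t)/2 + t = 1 := by ring
    have hx' : x ∈ interior (convexHull ℝ ({u, v, w'} : Set E2)) := by
      rw [hIC']
      intro i
      have h := aff3 (B'.coord i) u v w' ((1-t)/2) ((1-t)/2) t hxs
      rw [← hx] at h
      rw [h]
      fin_cases i <;>
        simp [← hB'0, ← hB'1, ← hB'2, AffineBasis.coord_apply] <;> linarith
    have hxw : x = ((1-t)/2 + t*a0) • u + ((1-t)/2 + t*a1) • v + (t*a2) • w := by
      rw [hx, ← hrep]; module
    have hxs2 : ((1-t)/2 + t*a0) + ((1-t)/2 + t*a1) + t*a2 = 1 := by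
      have : (1-t) + t*(a0+a1+a2) = 1 := by rw [hsum]; ring
      linarith [this]
    have hxmem : x ∈ interior (convexHull ℝ ({u, v, w} : Set E2)) := by
      rw [hIC]
      intro i
      have h := aff3 (B.coord i) u v w ((1-t)/2 + t*a0) ((1-t)/2 + t*a1) (t*a2) hxs2
      rw [← hxw] at h
      rw [h]
      have h0 : -(4⁻¹:ℝ) < t * a0 := by
        linarith [mul_le_mul_of_nonneg_left (neg_abs_le a0) ht0.le]
      have h1 : -(4⁻¹:ℝ) < t * a1 := by
        linarith [mul_le_mul_of_nonneg_left (neg_abs_le a1) ht0.le]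
      fin_cases i <;>
        simp [← hB0, ← hB1, ← hB2, AffineBasis.coord_apply] <;>
        linarith [mul_pos ht0 hpos]
    have : x ∈ (∅ : Set E2) := hdisj ▸ ⟨hxmem, hx'⟩
    exact this.elim
  exact (not_lt.1 hnpos).lt_of_ne hne

end Helpers

local notation "E2" => EuclideanSpace ℝ (Fin 2)

set_option maxHeartbeats 2000000 in
/-- If `△uvw` and `△uvw'` share the edge `uv`, have disjoint interiors, all side lengths
at least `M` and all angles between `α` and `β`, then the segment joining the two
incentres is contained in the union of the two triangles and meets the common edge. -/
theorem stmt3 (α β M : ℝ) (hα : 0 < α) (hβ : β < π) (hαπ : α < π) (hβ0 : 0 < β)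
    (hM : 0 < M) (u v w w' : EuclideanSpace ℝ (Fin 2))
    (hind : ¬ Collinear ℝ ({u, v, w} : Set (EuclideanSpace ℝ (Fin 2))))
    (hind' : ¬ Collinear ℝ ({u, v, w'} : Set (EuclideanSpace ℝ (Fin 2))))
    (hdisj : interior (convexHull ℝ ({u, v, w} : Set (EuclideanSpace ℝ (Fin 2)))) ∩
        interior (convexHull ℝ ({u, v, w'} : Set (EuclideanSpace ℝ (Fin 2)))) = ∅)
    (hs₁ : M ≤ dist u v) (hs₂ : M ≤ dist u w) (hs₃ : M ≤ dist v w)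
    (hs₂' : M ≤ dist u w') (hs₃' : M ≤ dist v w')
    (ha₁ : α ≤ angle v u w) (ha₁' : angle v u w ≤ β)
    (ha₂ : α ≤ angle u v w) (ha₂' : angle u v w ≤ β)
    (ha₃ : α ≤ angle u w v) (ha₃' : angle u w v ≤ β)
    (hb₁ : α ≤ angle v u w') (hb₁' : angle v u w' ≤ β)
    (hb₂ : α ≤ angle u v w') (hb₂' : angle u v w' ≤ β)
    (hb₃ : α ≤ angle u w' v) (hb₃' : angle u w' v ≤ β) :
    segment ℝ (incentre u v w) (incentre u v w') ⊆
        convexHull ℝ ({u, v, w} : Set (EuclideanSpace ℝ (Fin 2))) ∪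
          convexHull ℝ ({u, v, w'} : Set (EuclideanSpace ℝ (Fin 2))) ∧
      (segment ℝ (incentre u v w) (incentre u v w') ∩ segment ℝ u v).Nonempty := by
  clear ha₁ ha₁' ha₂ ha₂' ha₃ ha₃' hb₁ hb₁' hb₂ hb₂' hb₃ hb₃' hα hβ hαπ hβ0
  obtain ⟨B, hB0, hB1, hB2⟩ := mkBasis u v w hind
  obtain ⟨B', hB'0, hB'1, hB'2⟩ := mkBasis u v w' hind'
  set c : E2 := incentre u v w with hc
  set c' : E2 := incentre u v w' with hc'
  set aL := dist v w with haL
  set bL := dist u w with hbL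
  set cL := dist u v with hcLd
  set aL' := dist v w' with haL'
  set bL' := dist u w' with hbL'
  have haL0 : 0 < aL := lt_of_lt_of_le hM hs₃
  have hbL0 : 0 < bL := lt_of_lt_of_le hM hs₂
  have hcL0 : 0 < cL := lt_of_lt_of_le hM hs₁
  have haL'0 : 0 < aL' := lt_of_lt_of_le hM hs₃'
  have hbL'0 : 0 < bL' := lt_of_lt_of_le hM hs₂'
  set P := aL + bL + cL with hP
  set P' := aL' + bL' + cL with hP'
  have hP0 : 0 < P := by positivity
  have hP'0 : 0 < P' := by positivity
  -- coordinates of w' in basis B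
  set a0 := B.coord 0 w' with ha0
  set a1 := B.coord 1 w' with ha1
  set a2 := B.coord 2 w' with ha2
  have hsa : a0 + a1 + a2 = 1 := by
    have := B.sum_coord_apply_eq_one w'; rwa [Fin.sum_univ_three] at this
  have hrep : a0 • u + a1 • v + a2 • w = w' := by
    have := B.linear_combination_coord_eq_self w'
    rwa [Fin.sum_univ_three, hB0, hB1, hB2] at this
  have ha2neg : a2 < 0 :=
    coord2_neg u v w w' hind' hdisj B B' hB0 hB1 hB2 hB'0 hB'1 hB'2
  -- interior characterizations
  have hIC : interior (convexHull ℝ ({u, v, w} : Set E2)) = {x | ∀ i, 0 < B.coord i x} := by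
    rw [← rangeB B u v w hB0 hB1 hB2, B.interior_convexHull]
  have hIC' : interior (convexHull ℝ ({u, v, w'} : Set E2)) = {x | ∀ i, 0 < B'.coord i x} := by
    rw [← rangeB B' u v w' hB'0 hB'1 hB'2, B'.interior_convexHull]
  -- incentre representations
  have hcrep : c = (P⁻¹*aL) • u + (P⁻¹*bL) • v + (P⁻¹*cL) • w := by
    rw [hc, incentre, ← haL, ← hbL, ← hcLd, ← hP]; module
  have hcsum : P⁻¹*aL + P⁻¹*bL + P⁻¹*cL = 1 := by
    field_simp
    rw [hP]
  have hc'rep : c' = (P'⁻¹*aL') • u + (P'⁻¹*bL') • v + (P'⁻¹*cL) • w' := by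
    rw [hc', incentre, ← haL', ← hbL', ← hcLd, ← hP']; module
  have hc'sum : P'⁻¹*aL' + P'⁻¹*bL' + P'⁻¹*cL = 1 := by
    field_simp
    rw [hP']
  -- c in interior of triangle uvw, c' in interior of triangle uvw'
  have hcmem : c ∈ interior (convexHull ℝ ({u, v, w} : Set E2)) := by
    rw [hIC]
    intro i
    rw [hcrep, aff3 _ _ _ _ _ _ _ hcsum]
    fin_cases i <;> simp [← hB0, ← hB1, ← hB2, AffineBasis.coord_apply] <;> positivity
  have hc'mem : c' ∈ interior (convexHull ℝ ({u, v, w'} : Set E2)) := by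
    rw [hIC']
    intro i
    rw [hc'rep, aff3 _ _ _ _ _ _ _ hc'sum]
    fin_cases i <;> simp [← hB'0, ← hB'1, ← hB'2, AffineBasis.coord_apply] <;> positivity
  -- B-coordinates of c'
  have hc'rep2 : c' = (P'⁻¹*(aL' + cL*a0)) • u + (P'⁻¹*(bL' + cL*a1)) • v
      + (P'⁻¹*(cL*a2)) • w := by
    rw [hc'rep, ← hrep]; module
  have hc'sum2 : P'⁻¹*(aL' + cL*a0) + P'⁻¹*(bL' + cL*a1) + P'⁻¹*(cL*a2) = 1 := by
    field_simp
    linear_combination cL * hsa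
  -- coordinate values
  set y0 := P⁻¹*aL with hy0v
  set y1 := P⁻¹*bL with hy1v
  set y2 := P⁻¹*cL with hy2v
  set z0 := P'⁻¹*(aL' + cL*a0) with hz0v
  set z1 := P'⁻¹*(bL' + cL*a1) with hz1v
  set z2 := P'⁻¹*(cL*a2) with hz2v
  have hy2pos : 0 < y2 := by rw [hy2v]; positivity
  have hz2neg : z2 < 0 := by
    rw [hz2v]
    have : cL * a2 < 0 := mul_neg_of_pos_of_neg hcL0 ha2neg
    exact mul_neg_of_pos_of_neg (by positivity) this
  have hcoordc : ∀ i, B.coord i c = ![y0, y1, y2] i := by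
    intro i
    rw [hcrep, aff3 _ _ _ _ _ _ _ hcsum]
    fin_cases i <;> simp [← hB0, ← hB1, ← hB2, AffineBasis.coord_apply]
  have hcoordc' : ∀ i, B.coord i c' = ![z0, z1, z2] i := by
    intro i
    rw [hc'rep2, aff3 _ _ _ _ _ _ _ hc'sum2]
    fin_cases i <;> simp [← hB0, ← hB1, ← hB2, AffineBasis.coord_apply]
  -- triangle inequalities
  have hvw' : w' - v = a0 • (u - v) + a2 • (w - v) := by
    rw [← hrep]
    have h1 : a1 = 1 - a0 - a2 := by linarith
    rw [h1]; module
  have huw' : w' - u = a1 • (v - u) + a2 • (w - u) := by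
    rw [← hrep]
    have h1 : a0 = 1 - a1 - a2 := by linarith
    rw [h1]; module
  have habs2 : |a2| = -a2 := abs_of_neg ha2neg
  have htri1 : |a0| * cL + a2 * aL ≤ aL' := by
    have h1 : aL' = ‖w' - v‖ := by rw [haL', dist_eq_norm, norm_sub_rev]
    have h2 : ‖a0 • (u - v)‖ - ‖a2 • (w - v)‖ ≤ ‖a0 • (u - v) + a2 • (w - v)‖ := by
      have := norm_sub_norm_le (a0 • (u - v)) (-(a2 • (w - v)))
      simpa using this
    rw [← hvw'] at h2
    rw [norm_smul, norm_smul, Real.norm_eq_abs, Real.norm_eq_abs] at h2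
    have h3 : ‖u - v‖ = cL := by rw [hcLd, dist_eq_norm]
    have h4 : ‖w - v‖ = aL := by rw [haL, dist_eq_norm, norm_sub_rev]
    rw [h3, h4, habs2] at h2
    rw [h1]; linarith
  have htri2 : |a1| * cL + a2 * bL ≤ bL' := by
    have h1 : bL' = ‖w' - u‖ := by rw [hbL', dist_eq_norm, norm_sub_rev]
    have h2 : ‖a1 • (v - u)‖ - ‖a2 • (w - u)‖ ≤ ‖a1 • (v - u) + a2 • (w - u)‖ := by
      have := norm_sub_norm_le (a1 • (v - u)) (-(a2 • (w - u)))
      simpa using this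
    rw [← huw'] at h2
    rw [norm_smul, norm_smul, Real.norm_eq_abs, Real.norm_eq_abs] at h2
    have h3 : ‖v - u‖ = cL := by rw [hcLd, dist_eq_norm, norm_sub_rev]
    have h4 : ‖w - u‖ = bL := by rw [hbL, dist_eq_norm, norm_sub_rev]
    rw [h3, h4, habs2] at h2
    rw [h1]; linarith
  -- key nonnegativity
  have key0 : 0 ≤ (-a2)*aL + aL' + cL*a0 := by
    have := keyAux (a2*aL) aL' a0 cL hcL0 htri1
    linarith
  have key1 : 0 ≤ (-a2)*bL + bL' + cL*a1 := by
    have := keyAux (a2*bL) bL' a1 cL hcL0 htri2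
    linarith
  -- the crossing point
  set d := y2 - z2 with hd
  have hd0 : 0 < d := by rw [hd]; linarith
  set s := y2 / d with hs
  have hs0 : 0 < s := div_pos hy2pos hd0
  have hs1 : s < 1 := by
    rw [hs, div_lt_one hd0]; rw [hd]; linarith
  have hsd : s * d = y2 := by rw [hs]; field_simp
  set p : E2 := (1-s) • c + s • c' with hpdef
  have hpseg : p ∈ segment ℝ c c' :=
    ⟨1-s, s, by linarith, hs0.le, by ring, rfl⟩
  have hcoordp : ∀ i, B.coord i p = (1-s) * B.coord i c + s * B.coord i c' := by
    intro i
    have hrw : p = (1-s) • c + s • c' + (0:ℝ) • c' := by rw [hpdef]; module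
    rw [hrw, aff3 _ _ _ _ _ _ _ (by ring : (1-s) + s + 0 = 1)]
    ring
  have hp2 : B.coord 2 p = 0 := by
    rw [hcoordp 2, hcoordc 2, hcoordc' 2]
    show (1-s) * y2 + s * z2 = 0
    linear_combination s * hd - hsd
  set l0 := B.coord 0 p with hl0
  set l1 := B.coord 1 p with hl1
  have hl0v : l0 = (1-s) * y0 + s * z0 := by
    rw [hl0, hcoordp 0, hcoordc 0, hcoordc' 0]; rfl
  have hl1v : l1 = (1-s) * y1 + s * z1 := by
    rw [hl1, hcoordp 1, hcoordc 1, hcoordc' 1]; rfl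
  have hl0nn : 0 ≤ l0 := by
    have hdl : d * l0 = (-z2)*y0 + y2*z0 := by
      rw [hl0v]
      linear_combination (z0 - y0) * hsd + y0 * hd
    have hval : (-z2)*y0 + y2*z0 = P⁻¹*P'⁻¹*cL*((-a2)*aL + aL' + cL*a0) := by
      rw [hy0v, hy2v, hz0v, hz2v]; ring
    have h0 : 0 ≤ d * l0 := by
      rw [hdl, hval]
      have : (0:ℝ) ≤ P⁻¹*P'⁻¹*cL := by positivity
      exact mul_nonneg this key0
    exact nonnegAux d l0 hd0 h0
  have hl1nn : 0 ≤ l1 := by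
    have hdl : d * l1 = (-z2)*y1 + y2*z1 := by
      rw [hl1v]
      linear_combination (z1 - y1) * hsd + y1 * hd
    have hval : (-z2)*y1 + y2*z1 = P⁻¹*P'⁻¹*cL*((-a2)*bL + bL' + cL*a1) := by
      rw [hy1v, hy2v, hz1v, hz2v]; ring
    have h0 : 0 ≤ d * l1 := by
      rw [hdl, hval]
      have : (0:ℝ) ≤ P⁻¹*P'⁻¹*cL := by positivity
      exact mul_nonneg this key1
    exact nonnegAux d l1 hd0 h0
  have hlsum : l0 + l1 = 1 := by
    have := B.sum_coord_apply_eq_one p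
    rw [Fin.sum_univ_three, ← hl0, ← hl1, hp2] at this
    linarith
  have hprep : l0 • u + l1 • v = p := by
    have := B.linear_combination_coord_eq_self p
    rw [Fin.sum_univ_three, hB0, hB1, hB2, ← hl0, ← hl1, hp2, zero_smul, add_zero] at this
    exact this
  have hpuv : p ∈ segment ℝ u v := ⟨l0, l1, hl0nn, hl1nn, hlsum, hprep⟩
  -- hull memberships
  have huH : u ∈ convexHull ℝ ({u, v, w} : Set E2) := subset_convexHull ℝ _ (by simp)
  have hvH : v ∈ convexHull ℝ ({u, v, w} : Set E2) := subset_convexHull ℝ _ (by simp)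
  have huH' : u ∈ convexHull ℝ ({u, v, w'} : Set E2) := subset_convexHull ℝ _ (by simp)
  have hvH' : v ∈ convexHull ℝ ({u, v, w'} : Set E2) := subset_convexHull ℝ _ (by simp)
  have hcH : c ∈ convexHull ℝ ({u, v, w} : Set E2) := interior_subset hcmem
  have hc'H : c' ∈ convexHull ℝ ({u, v, w'} : Set E2) := interior_subset hc'mem
  have hpH : p ∈ convexHull ℝ ({u, v, w} : Set E2) :=
    (convex_convexHull ℝ _).segment_subset huH hvH hpuv
  have hpH' : p ∈ convexHull ℝ ({u, v, w'} : Set E2) :=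
    (convex_convexHull ℝ _).segment_subset huH' hvH' hpuv
  constructor
  · rintro q ⟨r1, r2, hr1, hr2, hr12, rfl⟩
    rcases le_or_gt r2 s with hcase | hcase
    · left
      have hq : r1 • c + r2 • c' ∈ segment ℝ c p := by
        refine ⟨1 - r2/s, r2/s, ?_, by positivity, by ring, ?_⟩
        · have : r2/s ≤ 1 := (div_le_one hs0).2 hcase
          linarith
        · rw [hpdef]
          have hr1' : r1 = 1 - r2 := by linarith
          rw [hr1']
          match_scalars <;> field_simp <;> ring
      exact (convex_convexHull ℝ _).segment_subset hcH hpH hq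
    · right
      have h1s : (0:ℝ) < 1 - s := by linarith
      have hq : r1 • c + r2 • c' ∈ segment ℝ p c' := by
        refine ⟨1 - (r2-s)/(1-s), (r2-s)/(1-s), ?_, ?_, by ring, ?_⟩
        · have hr21 : r2 ≤ 1 := by linarith
          have : (r2-s)/(1-s) ≤ 1 := (div_le_one h1s).2 (by linarith)
          linarith
        · exact div_nonneg (by linarith) (by linarith)
        · rw [hpdef]
          have hr1' : r1 = 1 - r2 := by linarith
          rw [hr1']
          match_scalars <;> field_simp <;> ring
      exact (convex_convexHull ℝ _).segment_subset hpH' hc'H hq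
  · exact ⟨p, hpseg, hpuv⟩
end

section
/- Let t = △uvw and t' = △uvw' be two triangles in ℝ² sharing the edge uv, with disjoint interiors, all side lengths at least M, and all angles between α and β (0 < α, β < π). Setting b = cos²(β/2)·sin(α/2)/2, the distance from the set {u, v} to the segment joining the incentres c(t) and c(t') is at least bM. -/
open EuclideanGeometry Real Metric

/-!
The incentre `I` of `△uvw` satisfies `⟪I - u, v - u⟫ = |uw|·|uv|²·(1 + cos ∠u) / (perimeter)`.
Since `1 + cos ∠u = 2 cos²(∠u/2) ≥ 2 cos²(β/2)`, the perimeter is at most `2(|uw| + |uv|)` and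
`|uw|·|uv| / (|uw| + |uv|) ≥ M/2`, this is at least `r·|uv|` with `r = cos²(β/2)·M/2`.
So both incentres lie in the half-plane `{p | ⟪p - u, v - u⟫ ≥ r·|uv|}`, hence so does the segment
joining them, and Cauchy–Schwarz gives `dist u p ≥ r` on it; the same holds at `v` by symmetry.
The factor `sin(α/2) ≤ 1` only weakens the bound.
-/

open scoped RealInnerProductSpace

section HalfSpace

variable {E : Type*} [NormedAddCommGroup E] [InnerProductSpace ℝ E]

theorem convex_setOf_le_inner_sub (x d : E) (r : ℝ) : Convex ℝ {z : E | r ≤ ⟪z - x, d⟫} := by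
  have h : {z : E | r ≤ ⟪z - x, d⟫} = {z | r + ⟪d, x⟫ ≤ innerₛₗ ℝ d z} := by
    ext z
    simp only [Set.mem_ofPred_eq, innerₛₗ_apply_apply, real_inner_comm d, inner_sub_right]
    constructor <;> intro <;> linarith
  exact h ▸ convex_halfSpace_ge (innerₛₗ ℝ d).isLinear _

theorem le_dist_of_mul_dist_le_inner {x y z : E} {r : ℝ} (hxy : x ≠ y)
    (h : r * dist x y ≤ ⟪z - x, y - x⟫) : r ≤ dist x z := by
  have hCS : ⟪z - x, y - x⟫ ≤ dist x z * dist x y := by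
    simpa only [dist_comm x, dist_eq_norm] using real_inner_le_norm (z - x) (y - x)
  exact le_of_mul_le_mul_right (h.trans hCS) (dist_pos.2 hxy)

theorem le_dist_of_mem_segment {x y p q z : E} {r : ℝ} (hxy : x ≠ y)
    (hp : r * dist x y ≤ ⟪p - x, y - x⟫) (hq : r * dist x y ≤ ⟪q - x, y - x⟫)
    (hz : z ∈ segment ℝ p q) : r ≤ dist x z :=
  le_dist_of_mul_dist_le_inner hxy <|
    (convex_setOf_le_inner_sub x (y - x) (r * dist x y)).segment_subset hp hq hz

end HalfSpace

theorem incentre_comm (u v w : EuclideanSpace ℝ (Fin 2)) : incentre u v w = incentre v u w := by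
  simp only [incentre, dist_comm v u]
  match_scalars <;> ring

theorem inner_incentre_sub (u v w : EuclideanSpace ℝ (Fin 2)) :
    ⟪incentre u v w - u, v - u⟫ = dist u w * dist u v ^ 2 * (1 + cos (∠ v u w)) /
      (dist v w + dist u w + dist u v) := by
  rcases eq_or_ne u v with rfl | huv
  · simp
  have hS : dist v w + dist u w + dist u v ≠ 0 := by
    linarith [dist_pos.2 huv, dist_nonneg (x := v) (y := w), dist_nonneg (x := u) (y := w)]
  have hsub : incentre u v w - u = (dist v w + dist u w + dist u v)⁻¹ •
      (dist u w • (v - u) + dist u v • (w - u)) := by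
    rw [incentre]
    match_scalars <;> field_simp; ring
  have hcos : ⟪w - u, v - u⟫ = cos (∠ v u w) * (dist u v * dist u w) := by
    rw [real_inner_comm, angle, ← InnerProductGeometry.cos_angle_mul_norm_mul_norm,
      dist_comm u v, dist_comm u w, dist_eq_norm_vsub, dist_eq_norm_vsub, vsub_eq_sub, vsub_eq_sub]
  rw [hsub, real_inner_smul_left, inner_add_left, real_inner_smul_left, real_inner_smul_left,
    real_inner_self_eq_norm_sq, hcos, ← dist_eq_norm']
  field_simp

theorem cos_half_sq_mul_le_inner_incentre_sub {β M : ℝ} {u v w : EuclideanSpace ℝ (Fin 2)}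
    (hβ : β ≤ π) (huv : M ≤ dist u v) (huw : M ≤ dist u w) (hangle : ∠ v u w ≤ β) :
    cos (β / 2) ^ 2 * M / 2 * dist u v ≤ ⟪incentre u v w - u, v - u⟫ := by
  rcases eq_or_ne u v with rfl | huv'
  · simp
  rw [inner_incentre_sub]
  set K := cos (β / 2) ^ 2
  set a := dist v w
  set b := dist u w
  set c := dist u v
  have hc : 0 < c := dist_pos.2 huv'
  have hb : 0 ≤ b := dist_nonneg
  have hS : 0 < a + b + c := by positivity
  have hK : 2 * K ≤ 1 + cos (∠ v u w) := by
    have h := cos_le_cos_of_nonneg_of_le_pi (angle_nonneg v u w) hβ hangle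
    have hK : K = 1 / 2 + cos β / 2 := by simp only [K, cos_sq, mul_div_cancel₀ β two_ne_zero]
    linarith
  have htri : a ≤ b + c := by
    simpa only [a, b, c, dist_comm u v, add_comm] using dist_triangle v u w
  have hMS : M * (a + b + c) ≤ 4 * b * c := by
    rcases le_or_gt M 0 with hM | hM <;> nlinarith
  rw [le_div_iff₀ hS]
  calc K * M / 2 * c * (a + b + c) = K * c / 2 * (M * (a + b + c)) := by ring
    _ ≤ K * c / 2 * (4 * b * c) := by gcongr
    _ = b * c ^ 2 * (2 * K) := by ring
    _ ≤ b * c ^ 2 * (1 + cos (∠ v u w)) := by gcongr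

theorem stmt4_general (α β M : ℝ) (hβ : β < π)
    (hM : 0 < M) (u v w w' : EuclideanSpace ℝ (Fin 2))
    (hs₁ : M ≤ dist u v) (hs₂ : M ≤ dist u w) (hs₃ : M ≤ dist v w)
    (hs₂' : M ≤ dist u w') (hs₃' : M ≤ dist v w')
    (ha₁' : angle v u w ≤ β)
    (ha₂' : angle u v w ≤ β)
    (hb₁' : angle v u w' ≤ β)
    (hb₂' : angle u v w' ≤ β) :
    ∀ p ∈ segment ℝ (incentre u v w) (incentre u v w'),
      (cos (β / 2) ^ 2 * sin (α / 2) / 2) * M ≤ dist u p ∧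
      (cos (β / 2) ^ 2 * sin (α / 2) / 2) * M ≤ dist v p := by
  intro p hp
  have hsin : cos (β / 2) ^ 2 * sin (α / 2) / 2 * M ≤ cos (β / 2) ^ 2 * M / 2 := by
    linarith [mul_le_mul_of_nonneg_left (sin_le_one (α / 2))
      (mul_nonneg (sq_nonneg (cos (β / 2))) hM.le)]
  have huv : u ≠ v := dist_pos.1 (hM.trans_le hs₁)
  refine ⟨hsin.trans <| le_dist_of_mem_segment huv
    (cos_half_sq_mul_le_inner_incentre_sub hβ.le hs₁ hs₂ ha₁')
    (cos_half_sq_mul_le_inner_incentre_sub hβ.le hs₁ hs₂' hb₁') hp, ?_⟩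
  rw [incentre_comm u v w, incentre_comm u v w'] at hp
  rw [dist_comm u v] at hs₁
  exact hsin.trans <| le_dist_of_mem_segment huv.symm
    (cos_half_sq_mul_le_inner_incentre_sub hβ.le hs₁ hs₃ ha₂')
    (cos_half_sq_mul_le_inner_incentre_sub hβ.le hs₁ hs₃' hb₂') hp

/-- If `△uvw` and `△uvw'` share the edge `uv`, have disjoint interiors, all side lengths
at least `M` and all angles between `α` and `β`, then every point of the segment joining
the two incentres is at distance at least `b·M` from `u` and from `v`, where
`b = cos²(β/2)·sin(α/2)/2`. -/
theorem stmt4 (α β M : ℝ) (hα : 0 < α) (hβ : β < π) (hαπ : α < π) (hβ0 : 0 < β)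
    (hM : 0 < M) (u v w w' : EuclideanSpace ℝ (Fin 2))
    (hind : ¬ Collinear ℝ ({u, v, w} : Set (EuclideanSpace ℝ (Fin 2))))
    (hind' : ¬ Collinear ℝ ({u, v, w'} : Set (EuclideanSpace ℝ (Fin 2))))
    (hdisj : interior (convexHull ℝ ({u, v, w} : Set (EuclideanSpace ℝ (Fin 2)))) ∩
        interior (convexHull ℝ ({u, v, w'} : Set (EuclideanSpace ℝ (Fin 2)))) = ∅)
    (hs₁ : M ≤ dist u v) (hs₂ : M ≤ dist u w) (hs₃ : M ≤ dist v w)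
    (hs₂' : M ≤ dist u w') (hs₃' : M ≤ dist v w')
    (ha₁ : α ≤ angle v u w) (ha₁' : angle v u w ≤ β)
    (ha₂ : α ≤ angle u v w) (ha₂' : angle u v w ≤ β)
    (ha₃ : α ≤ angle u w v) (ha₃' : angle u w v ≤ β)
    (hb₁ : α ≤ angle v u w') (hb₁' : angle v u w' ≤ β)
    (hb₂ : α ≤ angle u v w') (hb₂' : angle u v w' ≤ β)
    (hb₃ : α ≤ angle u w' v) (hb₃' : angle u w' v ≤ β) :
    ∀ p ∈ segment ℝ (incentre u v w) (incentre u v w'),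
      (cos (β / 2) ^ 2 * sin (α / 2) / 2) * M ≤ dist u p ∧
      (cos (β / 2) ^ 2 * sin (α / 2) / 2) * M ≤ dist v p :=
  stmt4_general α β M hβ hM u v w w' hs₁ hs₂ hs₃ hs₂' hs₃' ha₁' ha₂' hb₁' hb₂'
end

section
/- Let φ be a free minimal action of ℤ² on a Cantor set X. For any M ≥ 1 there is a nonempty clopen set Y ⊆ X such that for every x ∈ X the set P(x) = {m ∈ ℤ² : x ∈ φᵐ(Y)} is M-separated and 2M-syndetic as a subset of ℝ². -/
/-!
Let `B` be the finite symmetric set of lattice vectors of length `< M`. Freeness and total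
disconnectedness give a clopen neighbourhood `U` of a point that is disjoint from its nonzero
`B`-translates, and minimality and compactness give finitely many translates of `U` covering `X`.
Running through these translates, greedily add to `Y` the part of each one that is not yet within
`B` of `Y`: this keeps `Y` clopen and disjoint from its nonzero `B`-translates, and at the end
every point of `X` lies in some `k +ᵥ Y` with `k ∈ B`. Hence two return times of an orbit to `Y`
differ by a vector outside `B`, and since every point of the plane is within `1` of a lattice
point, it is within `1 + M ≤ 2M` of a return time.
-/

open Metric

/-- The standard embedding of `ℤ²` into the Euclidean plane. -/
noncomputable def embZ2 (n : ℤ × ℤ) : EuclideanSpace ℝ (Fin 2) :=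
  (WithLp.equiv 2 (Fin 2 → ℝ)).symm ![(n.1 : ℝ), (n.2 : ℝ)]

open Set Pointwise

section DisjointTranslates

variable {G X : Type*} [AddCommGroup G] [AddAction G X]

def DisjointTranslates (B : Set G) (Y : Set X) : Prop :=
  ∀ k ∈ B, k ≠ 0 → Disjoint (k +ᵥ Y) Y

variable {B : Set G} {U V Y : Set X}

lemma DisjointTranslates.vadd (hU : DisjointTranslates B U) (n : G) :
    DisjointTranslates B (n +ᵥ U) := by
  intro k hk hk0
  rw [vadd_vadd, add_comm, ← vadd_vadd, disjoint_vadd_set]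
  exact hU k hk hk0

lemma DisjointTranslates.union_diff (hneg : ∀ k ∈ B, -k ∈ B) (hY : DisjointTranslates B Y)
    (hV : DisjointTranslates B V) : DisjointTranslates B (Y ∪ (V \ ⋃ k ∈ B, k +ᵥ Y)) := by
  intro k hk hk0
  rw [vadd_set_union, disjoint_union_left, disjoint_union_right, disjoint_union_right,
    disjoint_vadd_set_left (s := V \ _)]
  exact ⟨⟨hY k hk hk0, disjoint_sdiff_right.mono_left
      (subset_biUnion_of_mem (u := fun k => k +ᵥ Y) hk)⟩,
    disjoint_sdiff_left.mono_right
      (subset_biUnion_of_mem (u := fun k => k +ᵥ Y) (hneg k hk)),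
    (hV k hk hk0).mono (vadd_set_mono sdiff_subset) sdiff_subset⟩

lemma DisjointTranslates.eq_of_vadd_eq (hY : DisjointTranslates B Y) {m m' : G} {y y' : X}
    (hy : y ∈ Y) (hy' : y' ∈ Y) (h : m +ᵥ y = m' +ᵥ y') (hB : m' - m ∈ B) : m = m' := by
  by_contra hne
  have hy_eq : (m' - m) +ᵥ y' = y := by
    rw [sub_eq_neg_add, ← vadd_vadd, ← h, neg_vadd_vadd]
  exact (hY _ hB (sub_ne_zero.mpr (Ne.symm hne))).ne_of_mem (vadd_mem_vadd_set hy') hy hy_eq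

end DisjointTranslates

section Topology

variable {G X : Type*} [AddCommGroup G] [AddAction G X] [TopologicalSpace X]
  [ContinuousConstVAdd G X]

lemma IsClopen.vadd {U : Set X} (hU : IsClopen U) (n : G) : IsClopen (n +ᵥ U) :=
  ⟨hU.isClosed.vadd n, hU.isOpen.vadd n⟩

lemma exists_isClopen_disjoint_vadd [TotallySeparatedSpace X] {k : G} {x : X}
    (hk : k +ᵥ x ≠ x) : ∃ W : Set X, IsClopen W ∧ x ∈ W ∧ Disjoint (k +ᵥ W) W := by
  obtain ⟨C, hC, hkxC, hxC⟩ := exists_isClopen_of_totally_separated hk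
  refine ⟨Cᶜ ∩ (-k +ᵥ C), hC.compl.inter (hC.vadd _), ⟨hxC, ⟨k +ᵥ x, hkxC, neg_vadd_vadd k x⟩⟩,
    disjoint_compl_right.mono ?_ inter_subset_left⟩
  calc k +ᵥ (Cᶜ ∩ (-k +ᵥ C)) ⊆ k +ᵥ (-k +ᵥ C) := vadd_set_mono inter_subset_right
    _ = C := vadd_neg_vadd k C

lemma exists_isClopen_disjointTranslates [TotallySeparatedSpace X] (B : Finset G) {x : X}
    (hfree : ∀ k ∈ B, k ≠ 0 → k +ᵥ x ≠ x) :
    ∃ U : Set X, IsClopen U ∧ x ∈ U ∧ DisjointTranslates (B : Set G) U := by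
  have hW : ∀ k : G, ∃ W : Set X, IsClopen W ∧ x ∈ W ∧
      (k ∈ B → k ≠ 0 → Disjoint (k +ᵥ W) W) := by
    intro k
    by_cases hk : k ∈ B ∧ k ≠ 0
    · obtain ⟨W, hWc, hxW, hWk⟩ := exists_isClopen_disjoint_vadd (hfree k hk.1 hk.2)
      exact ⟨W, hWc, hxW, fun _ _ => hWk⟩
    · exact ⟨univ, isClopen_univ, mem_univ x, fun h1 h2 => (hk ⟨h1, h2⟩).elim⟩
  choose W hWc hxW hWd using hW
  exact ⟨⋂ k ∈ B, W k, isClopen_biInter_finset fun k _ => hWc k, mem_iInter₂.mpr fun k _ => hxW k,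
    fun k hk hk0 => (hWd k hk hk0).mono (vadd_set_mono (biInter_subset_of_mem hk))
      (biInter_subset_of_mem hk)⟩

lemma exists_isClopen_disjointTranslates_cover {B : Finset G} (h0 : 0 ∈ B)
    (hneg : ∀ k ∈ B, -k ∈ B) {U : Set X} (hU : IsClopen U)
    (hUB : DisjointTranslates (B : Set G) U) (t : Finset G) :
    ∃ Y : Set X, IsClopen Y ∧ DisjointTranslates (B : Set G) Y ∧
      ∀ n ∈ t, n +ᵥ U ⊆ ⋃ k ∈ B, k +ᵥ Y := by
  classical
  induction t using Finset.induction_on with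
  | empty => exact ⟨∅, isClopen_empty, fun k _ _ => by simp, by simp⟩
  | insert n t _ ih =>
    obtain ⟨Y, hYc, hYB, hcov⟩ := ih
    set T := ⋃ k ∈ B, k +ᵥ Y
    have hT : T ⊆ ⋃ k ∈ B, k +ᵥ (Y ∪ ((n +ᵥ U) \ T)) :=
      biUnion_mono subset_rfl fun k _ => vadd_set_mono subset_union_left
    refine ⟨Y ∪ ((n +ᵥ U) \ T),
      hYc.union ((hU.vadd n).diff (isClopen_biUnion_finset fun k _ => hYc.vadd k)),
      hYB.union_diff hneg (hUB.vadd n), fun m hm => ?_⟩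
    rcases Finset.mem_insert.mp hm with rfl | hm
    · intro x hx
      by_cases hxT : x ∈ T
      · exact hT hxT
      · exact mem_biUnion h0 (by rw [zero_vadd]; exact Or.inr ⟨hx, hxT⟩)
    · exact (hcov m hm).trans hT

theorem exists_isClopen_disjointTranslates_forall_mem_vadd [CompactSpace X]
    [TotallySeparatedSpace X] [Nonempty X] [AddAction.IsMinimal G X]
    (hfree : ∀ (k : G) (x : X), k +ᵥ x = x → k = 0) {B : Finset G} (h0 : 0 ∈ B)
    (hneg : ∀ k ∈ B, -k ∈ B) :
    ∃ Y : Set X, IsClopen Y ∧ Y.Nonempty ∧ DisjointTranslates (B : Set G) Y ∧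
      ∀ x, ∃ k ∈ B, x ∈ k +ᵥ Y := by
  obtain ⟨x₀⟩ := ‹Nonempty X›
  obtain ⟨U, hUc, hx₀U, hUB⟩ :=
    exists_isClopen_disjointTranslates B fun k _ hk0 h => hk0 (hfree k x₀ h)
  obtain ⟨t, ht⟩ := isCompact_univ.exists_finite_cover_vadd G hUc.isOpen ⟨x₀, hx₀U⟩
  obtain ⟨Y, hYc, hYB, hcov⟩ := exists_isClopen_disjointTranslates_cover h0 hneg hUc hUB t
  have hX : ∀ x, ∃ k ∈ B, x ∈ k +ᵥ Y := fun x => by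
    obtain ⟨n, hn, hx⟩ := mem_iUnion₂.mp (ht (mem_univ x))
    simpa using hcov n hn hx
  obtain ⟨k, -, y, hy, -⟩ := hX x₀
  exact ⟨Y, hYc, ⟨y, hy⟩, hYB, hX⟩

end Topology

section Lattice

lemma embZ2_apply_zero (n : ℤ × ℤ) : embZ2 n 0 = n.1 := by simp [embZ2]

lemma embZ2_apply_one (n : ℤ × ℤ) : embZ2 n 1 = n.2 := by simp [embZ2]

lemma embZ2_sub (m n : ℤ × ℤ) : embZ2 (m - n) = embZ2 m - embZ2 n := by
  ext i
  fin_cases i <;> simp [embZ2]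

lemma embZ2_zero : embZ2 0 = 0 := by
  simpa using embZ2_sub 0 0

lemma dist_embZ2 (m n : ℤ × ℤ) : dist (embZ2 m) (embZ2 n) = ‖embZ2 (m - n)‖ := by
  rw [embZ2_sub, dist_eq_norm]

lemma norm_embZ2_neg (k : ℤ × ℤ) : ‖embZ2 (-k)‖ = ‖embZ2 k‖ := by
  rw [← zero_sub, embZ2_sub, embZ2_zero, zero_sub, norm_neg]

lemma norm_le_norm_embZ2 (k : ℤ × ℤ) : ‖k‖ ≤ ‖embZ2 k‖ := by
  rw [Prod.norm_def, Int.norm_eq_abs, Int.norm_eq_abs, ← embZ2_apply_zero, ← embZ2_apply_one,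
    ← Real.norm_eq_abs, ← Real.norm_eq_abs]
  exact max_le (PiLp.norm_apply_le _ _) (PiLp.norm_apply_le _ _)

lemma finite_setOf_norm_embZ2_lt (M : ℝ) : {k : ℤ × ℤ | ‖embZ2 k‖ < M}.Finite :=
  (isCompact_closedBall (0 : ℤ × ℤ) M).finite_of_discrete.subset fun k hk => by
    rw [mem_closedBall_zero_iff]
    exact (norm_le_norm_embZ2 k).trans hk.le

lemma exists_dist_embZ2_lt_one (v : EuclideanSpace ℝ (Fin 2)) :
    ∃ n : ℤ × ℤ, dist v (embZ2 n) < 1 := by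
  refine ⟨(round (v 0), round (v 1)), ?_⟩
  have hround : ∀ i, dist (v i) (round (v i) : ℝ) ≤ 1 / 2 := fun i => by
    rw [Real.dist_eq]; exact abs_sub_round (v i)
  rw [EuclideanSpace.dist_eq, Fin.sum_univ_two, Real.sqrt_lt' one_pos]
  simp only [embZ2_apply_zero, embZ2_apply_one]
  nlinarith [hround 0, hround 1, dist_nonneg (x := v 0) (y := (round (v 0) : ℝ)),
    dist_nonneg (x := v 1) (y := (round (v 1) : ℝ))]

end Lattice

theorem stmt12_general {X : Type*} [TopologicalSpace X] [CompactSpace X]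
    [TopologicalSpace.MetrizableSpace X] [TotallyDisconnectedSpace X]
    [Nonempty X]
    (φ : ℤ × ℤ → X ≃ₜ X) (h0 : φ 0 = Homeomorph.refl X)
    (hadd : ∀ (m n : ℤ × ℤ) (x : X), φ (m + n) x = φ m (φ n x))
    (hfree : ∀ (n : ℤ × ℤ) (x : X), φ n x = x → n = 0)
    (hmin : ∀ x : X, Dense (Set.range fun n : ℤ × ℤ => φ n x))
    (M : ℝ) (hM : 1 ≤ M) :
    ∃ Y : Set X, IsClopen Y ∧ Y.Nonempty ∧ ∀ x : X,
      (∀ m ∈ {k : ℤ × ℤ | x ∈ (φ k) '' Y}, ∀ m' ∈ {k : ℤ × ℤ | x ∈ (φ k) '' Y},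
        m ≠ m' → M ≤ dist (embZ2 m) (embZ2 m')) ∧
      (∀ v : EuclideanSpace ℝ (Fin 2),
        ∃ m ∈ {k : ℤ × ℤ | x ∈ (φ k) '' Y}, dist v (embZ2 m) < 2 * M) := by
  -- With this action, `φ k '' Y` is definitionally `k +ᵥ Y`.
  let _ : AddAction (ℤ × ℤ) X :=
    { vadd := fun n x => φ n x
      zero_vadd := fun x => by show φ 0 x = x; rw [h0]; rfl
      add_vadd := hadd }
  have : ContinuousConstVAdd (ℤ × ℤ) X := ⟨fun n => (φ n).continuous⟩
  have : AddAction.IsMinimal (ℤ × ℤ) X := ⟨hmin⟩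
  set B := (finite_setOf_norm_embZ2_lt M).toFinset
  have hB : ∀ k, k ∈ B ↔ ‖embZ2 k‖ < M := fun k => Finite.mem_toFinset _
  obtain ⟨Y, hYc, hYne, hYB, hcov⟩ := exists_isClopen_disjointTranslates_forall_mem_vadd hfree
    (B := B) ((hB 0).2 (by rw [embZ2_zero, norm_zero]; linarith))
    fun k hk => (hB _).2 (by rwa [norm_embZ2_neg, ← hB])
  refine ⟨Y, hYc, hYne, fun x => ⟨?_, fun v => ?_⟩⟩
  · rintro m ⟨y, hy, rfl⟩ m' ⟨y', hy', hxy⟩ hne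
    by_contra! hlt
    exact hne (hYB.eq_of_vadd_eq hy' hy hxy ((hB _).2 (by rwa [← dist_embZ2]))).symm
  · obtain ⟨n, hn⟩ := exists_dist_embZ2_lt_one v
    obtain ⟨k, hk, hx⟩ := hcov (-n +ᵥ x)
    refine ⟨n + k, ?_, ?_⟩
    · show x ∈ (n + k) +ᵥ Y
      rwa [← vadd_vadd, mem_vadd_set_iff_neg_vadd_mem]
    · calc dist v (embZ2 (n + k)) ≤ dist v (embZ2 n) + dist (embZ2 (n + k)) (embZ2 n) :=
            dist_triangle_right _ _ _
        _ < 1 + M := by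
          rw [dist_embZ2, add_sub_cancel_left]
          exact add_lt_add hn ((hB k).1 hk)
        _ ≤ 2 * M := by linarith

/-- For a free minimal action `φ` of `ℤ²` on a Cantor set `X` and any `M ≥ 1`, there is a
nonempty clopen `Y ⊆ X` such that for every `x`, the set
`P(x) = {m : x ∈ φᵐ(Y)}` is `M`-separated and `2M`-syndetic as a subset of `ℝ²`. -/
theorem stmt12 {X : Type*} [TopologicalSpace X] [CompactSpace X]
    [TopologicalSpace.MetrizableSpace X] [TotallyDisconnectedSpace X] [PerfectSpace X]
    [Nonempty X]
    (φ : ℤ × ℤ → X ≃ₜ X) (h0 : φ 0 = Homeomorph.refl X)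
    (hadd : ∀ (m n : ℤ × ℤ) (x : X), φ (m + n) x = φ m (φ n x))
    (hfree : ∀ (n : ℤ × ℤ) (x : X), φ n x = x → n = 0)
    (hmin : ∀ x : X, Dense (Set.range fun n : ℤ × ℤ => φ n x))
    (M : ℝ) (hM : 1 ≤ M) :
    ∃ Y : Set X, IsClopen Y ∧ Y.Nonempty ∧ ∀ x : X,
      (∀ m ∈ {k : ℤ × ℤ | x ∈ (φ k) '' Y}, ∀ m' ∈ {k : ℤ × ℤ | x ∈ (φ k) '' Y},
        m ≠ m' → M ≤ dist (embZ2 m) (embZ2 m')) ∧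
      (∀ v : EuclideanSpace ℝ (Fin 2),
        ∃ m ∈ {k : ℤ × ℤ | x ∈ (φ k) '' Y}, dist v (embZ2 m) < 2 * M) :=
  stmt12_general φ h0 hadd hfree hmin M hM
end

section
/- Let φ be a minimal action of ℤ² on a Cantor set X and let P(x), x ∈ X, be a φ-regular family of subsets of ℤ² with each P(x) nonempty. If P is locally derived from a φ-regular family Q via constant R, then P is itself φ-regular. -/
/-! Shifting `u₁ ∈ P x₁` to the origin, local derivability says that membership in `P` is
decided by the pattern of `Q` in the ball of radius `R` around the point. Translating `x` by
`φ n` translates this pattern along with the point, which gives equivariance. Near `x`, the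
set `Q` does not change inside a ball of radius `C + R`, so neither do the `R`-patterns of `Q`
around the points of a window `K ⊆ closedBall 0 C`, and hence neither does `P ∩ K`. -/

open Metric

lemma embZ2_neg (n : ℤ × ℤ) : embZ2 (-n) = -embZ2 n := by
  ext i
  fin_cases i <;> simp [embZ2]

section Patterns

variable {E : Type*}

lemma image_sub_image_add [AddCommGroup E] (S : Set E) (u v : E) :
    (· - (u + v)) '' ((· + v) '' S) = (· - u) '' S := by
  simp only [Set.image_image, add_sub_add_right_eq_sub]

lemma preimage_sub_ball [SeminormedAddCommGroup E] (u : E) (R : ℝ) :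
    (· - u) ⁻¹' ball 0 R = ball u R := by
  ext v
  simp [dist_eq_norm]

lemma image_sub_inter_ball_eq_of_inter_closedBall_eq [SeminormedAddCommGroup E]
    {S T : Set E} {u : E} {C R : ℝ} (hu : ‖u‖ ≤ C)
    (hST : S ∩ closedBall 0 (C + R) = T ∩ closedBall 0 (C + R)) :
    (· - u) '' S ∩ ball 0 R = (· - u) '' T ∩ ball 0 R := by
  have hball : ball u R ⊆ closedBall 0 (C + R) := by
    intro v hv
    rw [mem_closedBall]
    calc dist v 0 ≤ dist v u + dist u 0 := dist_triangle v u 0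
      _ ≤ R + C := add_le_add hv.le (by rwa [dist_zero_right])
      _ = C + R := add_comm R C
  rw [← Set.image_inter_preimage, ← Set.image_inter_preimage, preimage_sub_ball,
    ← Set.inter_eq_right.2 hball, ← Set.inter_assoc, ← Set.inter_assoc, hST]

end Patterns

section LocallyDerived

variable {X E : Type*} [SeminormedAddCommGroup E]

def IsLocallyDerivedFrom (P Q : X → Set E) (R : ℝ) : Prop :=
  ∀ (x₁ x₂ : X) (u₁ u₂ : E), u₁ ∈ P x₁ →
    (· - u₁) '' Q x₁ ∩ ball 0 R = (· - u₂) '' Q x₂ ∩ ball 0 R → u₂ ∈ P x₂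

def IsLocallyConstantOnCompacts [TopologicalSpace X] (P : X → Set E) : Prop :=
  ∀ (x : X) (K : Set E), IsCompact K →
    ∃ U : Set X, IsOpen U ∧ x ∈ U ∧ ∀ x' ∈ U, P x' ∩ K = P x ∩ K

variable {P Q : X → Set E} {R : ℝ}

lemma IsLocallyDerivedFrom.add_mem_of_image_add (hder : IsLocallyDerivedFrom P Q R)
    {x y : X} {v : E} (hQ : Q y = (· + v) '' Q x) {u : E} (hu : u ∈ P x) :
    u + v ∈ P y :=
  hder x y u (u + v) hu (by rw [hQ, image_sub_image_add])

lemma IsLocallyDerivedFrom.image_add_eq {G : Type*} [AddGroup G]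
    (hder : IsLocallyDerivedFrom P Q R) (φ : G → X → X) (τ : G → E)
    (hinv : ∀ n x, φ (-n) (φ n x) = x) (hτ : ∀ n, τ (-n) = -τ n)
    (hQ : ∀ n x, Q (φ n x) = (· + τ n) '' Q x) (n : G) (x : X) :
    P (φ n x) = (· + τ n) '' P x := by
  ext v
  constructor
  · intro hv
    have hback := hder.add_mem_of_image_add (hQ (-n) (φ n x)) hv
    rw [hinv, hτ] at hback
    exact ⟨v + -τ n, hback, neg_add_cancel_right v (τ n)⟩
  · rintro ⟨u, hu, rfl⟩
    exact hder.add_mem_of_image_add (hQ n x) hu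

lemma IsLocallyDerivedFrom.isLocallyConstantOnCompacts [TopologicalSpace X] [ProperSpace E]
    (hder : IsLocallyDerivedFrom P Q R) (hQ : IsLocallyConstantOnCompacts Q) :
    IsLocallyConstantOnCompacts P := by
  intro x K hK
  obtain ⟨C, hC⟩ := hK.isBounded.subset_closedBall 0
  obtain ⟨U, hUo, hxU, hU⟩ := hQ x (closedBall 0 (C + R)) (isCompact_closedBall 0 _)
  refine ⟨U, hUo, hxU, fun x' hx' => ?_⟩
  have hpattern : ∀ u ∈ K, (· - u) '' Q x' ∩ ball 0 R = (· - u) '' Q x ∩ ball 0 R :=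
    fun u hu => image_sub_inter_ball_eq_of_inter_closedBall_eq
      (by simpa using hC hu) (hU x' hx')
  ext u
  exact ⟨fun ⟨hu, huK⟩ => ⟨hder x' x u u hu (hpattern u huK), huK⟩,
    fun ⟨hu, huK⟩ => ⟨hder x x' u u hu (hpattern u huK).symm, huK⟩⟩

end LocallyDerived

theorem stmt13_general {X : Type*} [TopologicalSpace X]
    (φ : ℤ × ℤ → X ≃ₜ X) (h0 : φ 0 = Homeomorph.refl X)
    (hadd : ∀ (m n : ℤ × ℤ) (x : X), φ (m + n) x = φ m (φ n x))
    (P Q : X → Set (EuclideanSpace ℝ (Fin 2)))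
    (R : ℝ)
    (hder : ∀ (x₁ x₂ : X) (u₁ u₂ : EuclideanSpace ℝ (Fin 2)), u₁ ∈ P x₁ →
      ((· - u₁) '' Q x₁) ∩ ball 0 R = ((· - u₂) '' Q x₂) ∩ ball 0 R → u₂ ∈ P x₂)
    (hQeq : ∀ (n : ℤ × ℤ) (x : X), Q (φ n x) = (· + embZ2 n) '' Q x)
    (hQloc : ∀ (x : X) (K : Set (EuclideanSpace ℝ (Fin 2))), IsCompact K →
      ∃ U : Set X, IsOpen U ∧ x ∈ U ∧ ∀ x' ∈ U, Q x' ∩ K = Q x ∩ K) :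
    (∀ (n : ℤ × ℤ) (x : X), P (φ n x) = (· + embZ2 n) '' P x) ∧
      (∀ (x : X) (K : Set (EuclideanSpace ℝ (Fin 2))), IsCompact K →
        ∃ U : Set X, IsOpen U ∧ x ∈ U ∧ ∀ x' ∈ U, P x' ∩ K = P x ∩ K) := by
  have hder' : IsLocallyDerivedFrom P Q R := hder
  have hinv : ∀ n x, φ (-n) (φ n x) = x := fun n x => by
    rw [← hadd, neg_add_cancel, h0, Homeomorph.refl_apply, id]
  exact ⟨hder'.image_add_eq (fun n => φ n) embZ2 hinv embZ2_neg hQeq,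
    hder'.isLocallyConstantOnCompacts hQloc⟩

/-- If each `P(x)` is nonempty and `P` is locally derived (with constant `R`) from a
`φ`-regular family `Q`, then `P` is itself `φ`-regular: equivariant and locally constant
on compact windows. -/
theorem stmt13 {X : Type*} [TopologicalSpace X] [CompactSpace X]
    [TopologicalSpace.MetrizableSpace X] [TotallyDisconnectedSpace X]
    (φ : ℤ × ℤ → X ≃ₜ X) (h0 : φ 0 = Homeomorph.refl X)
    (hadd : ∀ (m n : ℤ × ℤ) (x : X), φ (m + n) x = φ m (φ n x))
    (hmin : ∀ x : X, Dense (Set.range fun n : ℤ × ℤ => φ n x))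
    (P Q : X → Set (EuclideanSpace ℝ (Fin 2)))
    (hne : ∀ x, (P x).Nonempty)
    (R : ℝ) (hR : 0 < R)
    (hder : ∀ (x₁ x₂ : X) (u₁ u₂ : EuclideanSpace ℝ (Fin 2)), u₁ ∈ P x₁ →
      ((· - u₁) '' Q x₁) ∩ ball 0 R = ((· - u₂) '' Q x₂) ∩ ball 0 R → u₂ ∈ P x₂)
    (hQeq : ∀ (n : ℤ × ℤ) (x : X), Q (φ n x) = (· + embZ2 n) '' Q x)
    (hQloc : ∀ (x : X) (K : Set (EuclideanSpace ℝ (Fin 2))), IsCompact K →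
      ∃ U : Set X, IsOpen U ∧ x ∈ U ∧ ∀ x' ∈ U, Q x' ∩ K = Q x ∩ K) :
    (∀ (n : ℤ × ℤ) (x : X), P (φ n x) = (· + embZ2 n) '' P x) ∧
      (∀ (x : X) (K : Set (EuclideanSpace ℝ (Fin 2))), IsCompact K →
        ∃ U : Set X, IsOpen U ∧ x ∈ U ∧ ∀ x' ∈ U, P x' ∩ K = P x ∩ K) :=
  stmt13_general φ h0 hadd P Q R hder hQeq hQloc
end

section
/- Let R be an equivalence relation with an étale topology on a Cantor set X, let K be a compact étale equivalence relation on X transverse to R. Then the map from R ×_X K to R ∨ K (the equivalence relation generated by R and K) sending ((x,y),(y,z)) to (x,z) is a bijection onto R ∨ K; in particular R ∨ K = {(x,z) : ∃y, (x,y) ∈ R, (y,z) ∈ K}. -/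
/-- `R ×_X K`: pairs `((x,y),(y,z))` with `(x,y) ∈ R`, `(y,z) ∈ K`. -/
def fibProd {X : Type*} (R K : Set (X × X)) : Set ((X × X) × (X × X)) :=
  {p | p.1 ∈ R ∧ p.2 ∈ K ∧ p.1.2 = p.2.1}

/-- If `K` is transverse to `R` (trivial intersection with `R`, plus a bijection
`h : R ×_X K → K ×_X R` commuting with the range and source maps), then the map
`((x,y),(y,z)) ↦ (x,z)` is a bijection from `R ×_X K` onto the equivalence relation
generated by `R` and `K`; in particular `R ∨ K = {(x,z) : ∃ y, (x,y) ∈ R ∧ (y,z) ∈ K}`. -/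
theorem stmt14 {X : Type*} (R K : Set (X × X))
    (hR : Equivalence fun a b => (a, b) ∈ R)
    (hK : Equivalence fun a b => (a, b) ∈ K)
    (htriv : K ∩ R = {p : X × X | p.1 = p.2})
    (h : (X × X) × (X × X) → (X × X) × (X × X))
    (hbij : Set.BijOn h (fibProd R K) (fibProd K R))
    (hr : ∀ p ∈ fibProd R K, (h p).1.1 = p.1.1)
    (hs : ∀ p ∈ fibProd R K, (h p).2.2 = p.2.2) :
    Set.InjOn (fun p : (X × X) × (X × X) => (p.1.1, p.2.2)) (fibProd R K) ∧
      (fun p : (X × X) × (X × X) => (p.1.1, p.2.2)) '' fibProd R K =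
        {q : X × X | Relation.EqvGen (fun a b => (a, b) ∈ R ∪ K) q.1 q.2} := by
  obtain ⟨hRr, hRs, hRt⟩ := hR
  obtain ⟨hKr, hKs, hKt⟩ := hK
  -- the composed relation
  set RK : X → X → Prop := fun a c => ∃ b, (a, b) ∈ R ∧ (b, c) ∈ K with hRK
  have hsymm : ∀ a c, RK a c → RK c a := by
    rintro a c ⟨b, hab, hbc⟩
    have hp : ((a, b), (b, c)) ∈ fibProd R K := ⟨hab, hbc, rfl⟩
    have hmem := hbij.mapsTo hp
    have e1 := hr _ hp
    have e2 := hs _ hp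
    rcases hw : h ((a, b), (b, c)) with ⟨⟨u1, u2⟩, u3, u4⟩
    rw [hw] at hmem e1 e2
    obtain ⟨h1, h2, h3⟩ := hmem
    simp only at e1 e2 h3
    subst e1; subst e2; subst h3
    exact ⟨u2, hRs h2, hKs h1⟩
  have htrans : ∀ a c d, RK a c → RK c d → RK a d := by
    rintro a c d ⟨b, hab, hbc⟩ ⟨e, hce, hed⟩
    have hq : ((b, c), (c, e)) ∈ fibProd K R := ⟨hbc, hce, rfl⟩
    obtain ⟨q, hqmem, hqeq⟩ := hbij.surjOn hq
    have e1 := hr _ hqmem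
    have e2 := hs _ hqmem
    rw [hqeq] at e1 e2
    obtain ⟨⟨u1, u2⟩, u3, u4⟩ := q
    obtain ⟨q1, q2, q3⟩ := hqmem
    simp only at e1 e2 q3
    subst e1; subst e2; subst q3
    exact ⟨u2, hRt hab q1, hKt q2 hed⟩
  constructor
  · rintro ⟨⟨x, y⟩, ⟨y', z⟩⟩ ⟨hxy, hyz, he⟩ ⟨⟨a, b⟩, ⟨b', c⟩⟩ ⟨hab, hbc, he2⟩ heq
    simp only at he he2
    subst he; subst he2
    simp only [Prod.mk.injEq] at heq
    obtain ⟨h1, h2⟩ := heq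
    subst h1; subst h2
    have hyb : (y, b) ∈ R := hRt (hRs hxy) hab
    have hybK : (y, b) ∈ K := hKt hyz (hKs hbc)
    have : y = b := by
      have hm : ((y, b) : X × X) ∈ K ∩ R := ⟨hybK, hyb⟩
      rw [htriv] at hm
      exact hm
    subst this; rfl
  · ext ⟨x, z⟩
    simp only [Set.mem_image, Set.mem_setOf_eq]
    constructor
    · rintro ⟨⟨⟨a, b⟩, ⟨b', c⟩⟩, ⟨h1, h2, h3⟩, h4⟩
      simp only at h3
      subst h3
      simp only [Prod.mk.injEq] at h4
      obtain ⟨rfl, rfl⟩ := h4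
      exact Relation.EqvGen.trans _ b _ (Relation.EqvGen.rel _ _ (Or.inl h1))
        (Relation.EqvGen.rel _ _ (Or.inr h2))
    · intro hgen
      have : RK x z := by
        induction hgen with
        | rel a b hab =>
          rcases hab with hab | hab
          · exact ⟨b, hab, hKr b⟩
          · exact ⟨a, hRr a, hab⟩
        | refl a => exact ⟨a, hRr a, hKr a⟩
        | symm a b _ ih => exact hsymm a b ih
        | trans a b c _ _ ih1 ih2 => exact htrans a b c ih1 ih2
      obtain ⟨y, hxy, hyz⟩ := this
      exact ⟨((x, y), (y, z)), ⟨hxy, hyz, rfl⟩, rfl⟩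
end

section
/- Let R be an equivalence relation on a set X and let α be a free action of a finite group G on X such that (αg × αg)(R) = R for all g ∈ G and (x, αg(x)) ∉ R for all x ∈ X and g ≠ e. Then K = {(x, αg(x)) : x ∈ X, g ∈ G} is an equivalence relation with K ∩ R = Δ_X, and the map h((x,y),(y,αg(y))) = ((x,αg(x)),(αg(x),αg(y))) is a bijection from R ×_X K to K ×_X R satisfying r∘h = r and s∘h = s. -/
/-- The orbit relation of a group action. -/
def orbitRel' (G X : Type*) [Group G] [MulAction G X] : Set (X × X) :=
  {p | ∃ g : G, p.2 = g • p.1}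

/-- For a free action of a finite group `G` on `X` leaving the equivalence relation `R`
invariant and with `(x, g•x) ∉ R` for `g ≠ e`, the orbit relation
`K = {(x, g•x)}` is an equivalence relation with `K ∩ R = Δ_X`, and
`h((x,y),(y,g•y)) = ((x,g•x),(g•x,g•y))` is a bijection `R ×_X K → K ×_X R` with
`r∘h = r` and `s∘h = s`. -/
theorem stmt15 {X G : Type*} [Group G] [Finite G] [MulAction G X]
    (hfree : ∀ (g : G) (x : X), g • x = x → g = 1)
    (R : Set (X × X)) (hR : Equivalence fun a b => (a, b) ∈ R)
    (hinv : ∀ (g : G) (x y : X), (x, y) ∈ R → (g • x, g • y) ∈ R)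
    (hdisj : ∀ (x : X) (g : G), g ≠ 1 → (x, g • x) ∉ R) :
    (Equivalence fun a b => (a, b) ∈ orbitRel' G X) ∧
      (orbitRel' G X ∩ R = {p : X × X | p.1 = p.2}) ∧
      ∃ h : (X × X) × (X × X) → (X × X) × (X × X),
        (∀ (x y : X) (g : G), (x, y) ∈ R →
          h ((x, y), (y, g • y)) = ((x, g • x), (g • x, g • y))) ∧
        Set.BijOn h (fibProd R (orbitRel' G X)) (fibProd (orbitRel' G X) R) ∧
        (∀ p ∈ fibProd R (orbitRel' G X), (h p).1.1 = p.1.1 ∧ (h p).2.2 = p.2.2) := by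
  classical
  have uniq : ∀ (g g' : G) (y : X), g • y = g' • y → g = g' := by
    intro g g' y hgy
    have h1 : (g'⁻¹ * g) • y = y := by
      rw [mul_smul, hgy, inv_smul_smul]
    have := hfree _ _ h1
    exact (inv_mul_eq_one.mp this).symm
  -- the map h
  set h : (X × X) × (X × X) → (X × X) × (X × X) := fun p =>
    if hc : ∃ g : G, p.2.2 = g • p.2.1 then
      ((p.1.1, hc.choose • p.1.1), (hc.choose • p.1.1, hc.choose • p.1.2))
    else p with hdef
  have hformula : ∀ (x y : X) (g : G),
      h ((x, y), (y, g • y)) = ((x, g • x), (g • x, g • y)) := by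
    intro x y g
    have hc : ∃ g' : G, ((x, y), (y, g • y)).2.2 = g' • ((x, y), (y, g • y)).2.1 :=
      ⟨g, rfl⟩
    have hg : hc.choose = g := uniq _ _ y hc.choose_spec.symm
    simp only [hdef, dif_pos hc, hg]
  refine ⟨⟨fun x => ⟨1, (one_smul G x).symm⟩,
      fun {x y} ⟨g, hg⟩ => ⟨g⁻¹, by simp only at hg ⊢; rw [hg, inv_smul_smul]⟩,
      fun {x y z} ⟨g, hg⟩ ⟨g', hg'⟩ => ⟨g' * g, by
        simp only at hg hg' ⊢; rw [hg', hg, mul_smul]⟩⟩, ?_, ?_⟩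
  · ext ⟨x, y⟩
    constructor
    · rintro ⟨⟨g, hg⟩, hr⟩
      simp only at hg
      subst hg
      by_cases hg1 : g = 1
      · simp [hg1]
      · exact absurd hr (hdisj x g hg1)
    · rintro h1
      simp only [Set.mem_setOf_eq] at h1
      subst h1
      exact ⟨⟨1, (one_smul G x).symm⟩, hR.refl x⟩
  · refine ⟨h, fun x y g _ => hformula x y g, ⟨?_, ?_, ?_⟩, ?_⟩
    · rintro ⟨⟨x, y⟩, ⟨y', z⟩⟩ ⟨hr, ⟨g, hg⟩, heq⟩
      simp only at heq hg hr; subst heq; subst hg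
      rw [hformula x y g]
      exact ⟨⟨g, rfl⟩, hinv g x y hr, rfl⟩
    · rintro ⟨⟨x, y⟩, ⟨y', z⟩⟩ ⟨hr, ⟨g, hg⟩, heq⟩ ⟨⟨a, b⟩, ⟨b', c⟩⟩ ⟨hr', ⟨g', hg'⟩, heq'⟩ hhe
      simp only at heq heq' hg hg' hr hr'
      subst heq; subst heq'; subst hg; subst hg'
      rw [hformula x y g, hformula a b g'] at hhe
      obtain ⟨⟨h1, h2⟩, h3, h4⟩ : (x = a ∧ g • x = g' • a) ∧ g • x = g' • a ∧ g • y = g' • b := by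
        simpa [Prod.ext_iff] using hhe
      subst h1
      have hgg : g = g' := uniq _ _ x h2
      subst hgg
      have : y = b := smul_left_cancel g h4
      subst this
      rfl
    · rintro ⟨⟨a, b⟩, ⟨b', c⟩⟩ ⟨⟨g, hg⟩, hr, heq⟩
      simp only at heq hg hr; subst heq; subst hg
      refine ⟨((a, g⁻¹ • c), (g⁻¹ • c, c)), ⟨?_, ⟨g, (smul_inv_smul g c).symm⟩, rfl⟩, ?_⟩
      · have := hinv g⁻¹ (g • a) c hr
        rwa [inv_smul_smul] at this
      · have := hformula a (g⁻¹ • c) g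
        rw [smul_inv_smul] at this
        exact this
    · rintro ⟨⟨x, y⟩, ⟨y', z⟩⟩ ⟨hr, ⟨g, hg⟩, heq⟩
      simp only at heq hg; subst heq; subst hg
      rw [hformula x y g]
      exact ⟨rfl, rfl⟩
end

section
/- Let φ be a free minimal action of ℤ² on a Cantor set X and suppose for each x ∈ X and each l ≥ 0 the set A_l(x) = {n ∈ ℤ² : (x, φⁿ(x)) ∈ R} contains a ball of radius l (where R is a fixed subrelation of the orbit relation). Then the R-equivalence class of every point x is dense in X, i.e. R is minimal. -/
open Metric Filter Topology

lemma embZ2_dist (m c : ℤ × ℤ) :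
    dist (embZ2 (m + c)) (embZ2 c) = Real.sqrt ((m.1:ℝ)^2 + (m.2:ℝ)^2) := by
  simp [embZ2, EuclideanSpace.dist_eq, Fin.sum_univ_two, Real.dist_eq, Prod.fst_add,
    Prod.snd_add]

/-- Let `φ` be a free minimal `ℤ²`-action on a Cantor set `X` and let `R` be a
subequivalence relation of the orbit relation such that for every `x` and every `l`, the
set `{n : (x, φⁿ x) ∈ R}` contains a ball of radius `l`. Then every `R`-equivalence class
is dense, i.e. `R` is minimal. -/
theorem stmt16 {X : Type*} [TopologicalSpace X] [CompactSpace X]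
    [TopologicalSpace.MetrizableSpace X] [TotallyDisconnectedSpace X]
    (φ : ℤ × ℤ → X ≃ₜ X) (h0 : φ 0 = Homeomorph.refl X)
    (hadd : ∀ (m n : ℤ × ℤ) (x : X), φ (m + n) x = φ m (φ n x))
    (hfree : ∀ (n : ℤ × ℤ) (x : X), φ n x = x → n = 0)
    (hmin : ∀ x : X, Dense (Set.range fun n : ℤ × ℤ => φ n x))
    (R : Set (X × X)) (hequiv : Equivalence fun a b => (a, b) ∈ R)
    (hsub : R ⊆ {p : X × X | ∃ n : ℤ × ℤ, p.2 = φ n p.1})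
    (hball : ∀ (x : X) (l : ℝ), ∃ c : ℤ × ℤ, ∀ n : ℤ × ℤ,
      dist (embZ2 n) (embZ2 c) < l → (x, φ n x) ∈ R) :
    ∀ x : X, Dense {y : X | (x, y) ∈ R} := by
  letI : MetricSpace X := TopologicalSpace.metrizableSpaceMetric X
  intro x
  rw [dense_iff_inter_open]
  rintro U hU ⟨y, hy⟩
  set c : ℕ → ℤ × ℤ := fun l => (hball x l).choose with hc
  have hcspec : ∀ (l : ℕ) (n : ℤ × ℤ),
      dist (embZ2 n) (embZ2 (c l)) < (l : ℝ) → (x, φ n x) ∈ R :=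
    fun l => (hball x l).choose_spec
  set a : ℕ → X := fun l => φ (c l) x with ha
  obtain ⟨z, -, ψ, hψ, hz⟩ :=
    IsCompact.tendsto_subseq (isCompact_univ (X := X)) (fun n : ℕ => Set.mem_univ (a n))
  obtain ⟨w, ⟨m, rfl⟩, hwU⟩ := (hmin z).exists_mem_open hU ⟨y, hy⟩
  have hten : Tendsto (fun k => φ m (a (ψ k))) atTop (𝓝 (φ m z)) :=
    ((φ m).continuous.tendsto z).comp hz
  have hevU : ∀ᶠ k in atTop, φ m (a (ψ k)) ∈ U := hten.eventually (hU.eventually_mem hwU)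
  set K : ℝ := Real.sqrt ((m.1:ℝ)^2 + (m.2:ℝ)^2) with hK
  obtain ⟨N, hN⟩ := exists_nat_gt K
  have hevK : ∀ᶠ k in atTop, K < (ψ k : ℝ) := by
    filter_upwards [eventually_ge_atTop N] with k hk
    exact hN.trans_le (by exact_mod_cast (hk.trans (hψ.le_apply)))
  obtain ⟨k, hkU, hkK⟩ := (hevU.and hevK).exists
  refine ⟨φ (m + c (ψ k)) x, ?_, ?_⟩
  · have : φ (m + c (ψ k)) x = φ m (a (ψ k)) := hadd m (c (ψ k)) x
    rw [this]; exact hkU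
  · show (x, φ (m + c (ψ k)) x) ∈ R
    exact hcspec (ψ k) _ (by rw [embZ2_dist]; exact hkK)
end
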